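/- arXiv:1710.02416 — 11 statements merged into one kernel-verified Lean document; each statement's English description precedes it below -/
import Mathlib

section
/- Let T be a tree on n vertices with adjacency matrix A and degree diagonal matrix D, and define the q-Laplacian L^q_T = I + q^2(D - I) - qA over the polynomial ring R[q]. Then det(L^q_T) = 1 - q^2. -/
/-!
Induct on the number of vertices by deleting a leaf `v` with neighbour `u`. The row and column
of `v` in `L^q_T` are `1` on the diagonal and `-q` at `u`, so the Schur complement of the `(v, v)`
entry is the remaining block with `q^2` subtracted at `(u, u)`; as `u` loses one neighbour, that
is exactly `L^q_{T - v}`. A single vertex has `det L^q = 1 - q^2`.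
-/

/-- The `q`-Laplacian `I + q^2 (D - I) - q A` of a graph, entrywise. -/
noncomputable def qLap {n : ℕ} (G : SimpleGraph (Fin n)) [DecidableRel G.Adj]
    {R : Type*} [CommRing R] (q : R) : Matrix (Fin n) (Fin n) R :=
  Matrix.of fun i j =>
    if i = j then 1 + q ^ 2 * ((G.degree i : R) - 1)
    else if G.Adj i j then -q else 0

open Matrix

namespace SimpleGraph

theorem IsTree.induce_compl_singleton_of_degree_eq_one {V : Type*} {G : SimpleGraph V}
    (hG : G.IsTree) {v : V} [Fintype (G.neighborSet v)] (hv : G.degree v = 1) :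
    (G.induce {v}ᶜ).IsTree :=
  ⟨hG.connected.induce_compl_singleton_of_degree_eq_one hv, hG.isAcyclic.induce _⟩

variable {V : Type*} [Fintype V] [DecidableEq V] {R : Type*} [CommRing R]

theorem degree_induce_compl_singleton_add (G : SimpleGraph V) [DecidableRel G.Adj] (v : V)
    {w : V} (hw : w ≠ v) :
    (G.induce {v}ᶜ).degree ⟨w, hw⟩ + (if G.Adj w v then 1 else 0) = G.degree w := by
  have hnbr : G.neighborFinset w ∩ ({v}ᶜ : Set V).toFinset = (G.neighborFinset w).erase v := by
    ext x
    simp [and_comm]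
  rw [← card_neighborFinset_eq_degree, ← Finset.card_map (.subtype _), map_neighborFinset_induce,
    hnbr, ← card_neighborFinset_eq_degree]
  split_ifs with hadj
  · exact Finset.card_erase_add_one ((mem_neighborFinset _ _ _).mpr hadj)
  · rw [Finset.erase_eq_of_notMem (by simpa using hadj), add_zero]

noncomputable def qLaplacian (G : SimpleGraph V) [DecidableRel G.Adj] (q : R) : Matrix V V R :=
  Matrix.of fun i j =>
    if i = j then 1 + q ^ 2 * ((G.degree i : R) - 1)
    else if G.Adj i j then -q else 0

theorem qLaplacian_apply_self (G : SimpleGraph V) [DecidableRel G.Adj] (q : R) (i : V) :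
    G.qLaplacian q i i = 1 + q ^ 2 * ((G.degree i : R) - 1) := by
  simp [qLaplacian]

theorem qLaplacian_apply_of_ne (G : SimpleGraph V) [DecidableRel G.Adj] (q : R) {i j : V}
    (h : i ≠ j) : G.qLaplacian q i j = if G.Adj i j then -q else 0 := by
  simp [qLaplacian, h]

theorem det_qLaplacian_of_unique [Unique V] (G : SimpleGraph V) [DecidableRel G.Adj] (q : R) :
    (G.qLaplacian q).det = 1 - q ^ 2 := by
  simp [det_unique, qLaplacian_apply_self, sub_eq_add_neg]

theorem det_qLaplacian_eq_of_degree_eq_one (G : SimpleGraph V) [DecidableRel G.Adj] (q : R)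
    {v : V} (hv : G.degree v = 1) :
    (G.qLaplacian q).det = ((G.induce {v}ᶜ).qLaplacian q).det := by
  obtain ⟨u, -, hu⟩ := degree_eq_one_iff_existsUnique_adj.mp hv
  have hleaf : toBlock (G.qLaplacian q) (· ∉ ({v}ᶜ : Set V)) (· ∉ ({v}ᶜ : Set V)) = 1 := by
    ext ⟨i, hi⟩ ⟨j, hj⟩
    simp only [Set.mem_compl_iff, Set.mem_singleton_iff, not_not] at hi hj
    subst hi hj
    simp [qLaplacian_apply_self, hv]
  rw [det_toBlock (G.qLaplacian q) (· ∈ ({v}ᶜ : Set V)), hleaf, det_fromBlocks_one₂₂]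
  congr 1
  let : Unique {x // x ∉ ({v}ᶜ : Set V)} :=
    ⟨⟨⟨v, by simp⟩⟩, fun ⟨x, hx⟩ => Subtype.ext (by simpa using hx)⟩
  ext ⟨a, ha⟩ ⟨b, hb⟩
  simp only [Matrix.sub_apply, mul_apply, Fintype.sum_unique, toBlock_apply]
  change G.qLaplacian q a b - G.qLaplacian q a v * G.qLaplacian q v b = _
  have ha' : a ≠ v := ha
  have hb' : b ≠ v := hb
  rw [qLaplacian_apply_of_ne _ _ ha', qLaplacian_apply_of_ne _ _ hb'.symm]
  by_cases hab : a = b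
  · subst hab
    rw [qLaplacian_apply_self, qLaplacian_apply_self,
      ← degree_induce_compl_singleton_add G v ha']
    simp only [adj_comm G v a]
    split_ifs <;> push_cast <;> ring
  · have hab' : (⟨a, ha⟩ : ({v}ᶜ : Set V)) ≠ ⟨b, hb⟩ := fun h => hab (congrArg Subtype.val h)
    have hpath : ¬ (G.Adj a v ∧ G.Adj v b) := fun ⟨hav, hvb⟩ =>
      hab ((hu a hav.symm).trans (hu b hvb).symm)
    rw [qLaplacian_apply_of_ne _ _ hab, qLaplacian_apply_of_ne _ _ hab']
    split_ifs <;> simp_all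

theorem IsTree.det_qLaplacian {G : SimpleGraph V} [DecidableRel G.Adj] (hG : G.IsTree) (q : R) :
    (G.qLaplacian q).det = 1 - q ^ 2 := by
  induction h : Fintype.card V using Nat.strong_induction_on generalizing V with
  | _ n ih =>
  rcases subsingleton_or_nontrivial V with hV | hV
  · have := _root_.uniqueOfSubsingleton hG.connected.nonempty.some
    exact det_qLaplacian_of_unique G q
  · obtain ⟨v, hv⟩ := hG.exists_vert_degree_one_of_nontrivial
    rw [det_qLaplacian_eq_of_degree_eq_one G q hv]
    have hcard : Fintype.card ({v}ᶜ : Set V) < n :=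
      h ▸ Fintype.card_subtype_lt (x := v) (by simp)
    exact ih _ hcard (hG.induce_compl_singleton_of_degree_eq_one hv) rfl

end SimpleGraph

theorem det_qLap_tree_general {n : ℕ} (G : SimpleGraph (Fin n))
    [DecidableRel G.Adj] (hG : G.IsTree) :
    (qLap G (Polynomial.X : Polynomial ℝ)).det = 1 - Polynomial.X ^ 2 :=
  hG.det_qLaplacian _

/-- For a tree `T` on `n ≥ 1` vertices, `det(L^q_T) = 1 - q^2` in `ℝ[q]`. -/
theorem det_qLap_tree {n : ℕ} (hn : 1 ≤ n) (G : SimpleGraph (Fin n))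
    [DecidableRel G.Adj] (hG : G.IsTree) :
    (qLap G (Polynomial.X : Polynomial ℝ)).det = 1 - Polynomial.X ^ 2 :=
  det_qLap_tree_general G hG
end

section
/- Let T be a tree on n vertices and define its exponential distance matrix ED_T by (ED_T)_{i,i} = 1 and (ED_T)_{i,j} = q^{d(i,j)} for i ≠ j, where d(i,j) is the graph distance in T. Then det(ED_T) = (1 - q^2)^{n-1}. -/
/-!
Induction on the number of vertices. If `v` is a leaf of `T` with neighbour `u`, then
`d(v, j) = d(u, j) + 1` for every `j ≠ v`, so subtracting `q` times row `u` from row `v` turns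
row `v` into `(1 - q²)` times the `v`-th unit vector. Expanding along that row leaves the
matrix of `T - v`, which is again a tree and, since no path of `T` passes through a leaf,
has the same distances as `T`.
-/

/-- The exponential distance matrix of a graph: diagonal entries `1`,
off-diagonal entries `q ^ d(i,j)` where `d` is the graph distance. -/
noncomputable def expDist {n : ℕ} (G : SimpleGraph (Fin n))
    {R : Type*} [CommRing R] (q : R) : Matrix (Fin n) (Fin n) R :=
  Matrix.of fun i j => if i = j then 1 else q ^ G.dist i j

namespace Matrix

variable {m R : Type*} [Fintype m] [DecidableEq m] [CommRing R]

theorem det_eq_mul_det_submatrix_compl_singleton (M : Matrix m m R) (i : m)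
    (h : ∀ j, j ≠ i → M i j = 0) :
    M.det = M i i * (M.submatrix ((↑) : ({i}ᶜ : Set m) → m) (↑)).det := by
  have : Subsingleton {k // ¬k ≠ i} :=
    ⟨fun a b => Subtype.ext ((not_not.1 a.2).trans (not_not.1 b.2).symm)⟩
  rw [M.twoBlockTriangular_det (· ≠ i) (fun k hk j hj => not_not.1 hk ▸ h j hj), mul_comm,
    det_eq_elem_of_subsingleton _ ⟨i, not_not_intro rfl⟩]
  rfl

end Matrix

namespace SimpleGraph

variable {V R : Type*} [CommRing R] {G : SimpleGraph V} {u v : V}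

noncomputable def expDistMatrix (G : SimpleGraph V) (q : R) : Matrix V V R :=
  Matrix.of fun i j => q ^ G.dist i j

theorem expDist_eq_expDistMatrix {n : ℕ} (G : SimpleGraph (Fin n)) (q : R) :
    expDist G q = G.expDistMatrix q := by
  ext i j
  by_cases h : i = j <;> simp [expDist, expDistMatrix, h]

theorem dist_induce_compl_singleton (hv : (G.neighborSet v).Subsingleton)
    (i j : ({v}ᶜ : Set V)) : (G.induce {v}ᶜ).dist i j = G.dist i j := by
  by_cases hr : G.Reachable i j
  · obtain ⟨p, hp, hlen⟩ := hr.exists_path_of_dist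
    have hpv : ∀ x ∈ p.support, x ∈ ({v}ᶜ : Set V) := by
      rintro x hx rfl
      exact hp.isTrail.not_mem_support_of_subsingleton_neighborSet (Ne.symm i.2) (Ne.symm j.2)
        hv hx
    have hlen' : (p.induce _ hpv).length = p.length := by
      rw [← Walk.length_map (Embedding.induce _).toHom, Walk.map_induce]
      rfl
    refine le_antisymm ?_ ?_
    · rw [← hlen, ← hlen']
      exact dist_le _
    obtain ⟨q, hq⟩ := (p.induce _ hpv).reachable.exists_walk_length_eq_dist
    rw [← hq, ← Walk.length_map (Embedding.induce _).toHom]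
    exact dist_le _
  · have hr' : ¬(G.induce {v}ᶜ).Reachable i j := fun h => hr (h.map (Embedding.induce _).toHom)
    rw [dist_eq_zero_of_not_reachable hr, dist_eq_zero_of_not_reachable hr']

theorem Reachable.dist_eq_dist_add_one_of_subsingleton_neighborSet {j : V} (hr : G.Reachable v j)
    (huv : G.Adj v u) (hv : (G.neighborSet v).Subsingleton) (hj : j ≠ v) :
    G.dist v j = G.dist u j + 1 := by
  refine le_antisymm ?_ ?_
  · calc G.dist v j ≤ G.dist v u + G.dist u j := huv.reachable.dist_triangle_left j
      _ = G.dist u j + 1 := by rw [dist_eq_one_iff_adj.mpr huv, add_comm]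
  · obtain ⟨p, hp⟩ := hr.exists_walk_length_eq_dist
    cases p with
    | nil => exact absurd rfl hj
    | @cons _ w _ hvw p =>
      obtain rfl : w = u := hv hvw huv
      rw [← hp, Walk.length_cons]
      exact Nat.add_le_add_right (dist_le p) 1

theorem det_expDistMatrix_eq_mul_det_induce [Fintype V] [DecidableEq V] (hG : G.Preconnected)
    (huv : G.Adj v u) (hv : (G.neighborSet v).Subsingleton) (q : R) :
    (G.expDistMatrix q).det = (1 - q ^ 2) * ((G.induce {v}ᶜ).expDistMatrix q).det := by
  set M := G.expDistMatrix q
  have hrow : ∀ j, j ≠ v → M v j + -q * M u j = 0 := by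
    intro j hj
    simp only [M, expDistMatrix, Matrix.of_apply,
      (hG v j).dist_eq_dist_add_one_of_subsingleton_neighborSet huv hv hj]
    ring
  calc M.det = (M.updateRow v (M v + (-q) • M u)).det :=
        (Matrix.det_updateRow_add_smul_self M huv.ne (-q)).symm
    _ = (1 - q ^ 2) * ((G.induce {v}ᶜ).expDistMatrix q).det := by
      rw [Matrix.det_eq_mul_det_submatrix_compl_singleton _ v (by simpa using hrow)]
      congr 1
      · simp only [M, expDistMatrix, Matrix.updateRow_self, Pi.add_apply, Pi.smul_apply,
          smul_eq_mul, Matrix.of_apply, dist_self, dist_eq_one_iff_adj.mpr huv.symm]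
        ring
      · congr 1
        ext i j
        simp [M, expDistMatrix, Matrix.updateRow_ne i.2, dist_induce_compl_singleton hv]

theorem IsTree.det_expDistMatrix [Fintype V] [DecidableEq V] (hG : G.IsTree) (q : R) :
    (G.expDistMatrix q).det = (1 - q ^ 2) ^ (Fintype.card V - 1) := by
  refine Fintype.induction_subsingleton_or_nontrivial
    (P := fun V _ => ∀ [DecidableEq V] (G : SimpleGraph V), G.IsTree →
      (G.expDistMatrix q).det = (1 - q ^ 2) ^ (Fintype.card V - 1))
    V (fun V _ _ _ G _ => ?_) (fun V _ _ ih _ G hG => ?_) G hG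
  · have hone : G.expDistMatrix q = 1 := by
      ext i j
      obtain rfl := Subsingleton.elim i j
      simp [expDistMatrix]
    rw [hone, Matrix.det_one, Nat.sub_eq_zero_of_le (Fintype.card_le_one_iff_subsingleton.2 ‹_›),
      pow_zero]
  · classical
    obtain ⟨v, hv⟩ := hG.exists_vert_degree_one_of_nontrivial
    obtain ⟨u, huv, hu⟩ := degree_eq_one_iff_existsUnique_adj.mp hv
    have hsub : (G.neighborSet v).Subsingleton := fun x hx y hy => (hu x hx).trans (hu y hy).symm
    have hG' : (G.induce {v}ᶜ).IsTree :=
      ⟨hG.connected.induce_compl_singleton_of_degree_eq_one hv, hG.isAcyclic.induce _⟩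
    have hcard : Fintype.card ({v}ᶜ : Set V) = Fintype.card V - 1 := by
      rw [Fintype.card_compl_set, Set.card_singleton]
    have hV : 1 < Fintype.card V := Fintype.one_lt_card
    rw [det_expDistMatrix_eq_mul_det_induce hG.connected.preconnected huv hsub,
      ih _ (by omega) _ hG', hcard, ← pow_succ']
    congr 1
    omega

end SimpleGraph

/-- For a tree `T` on `n` vertices, `det(ED_T) = (1 - q^2)^(n-1)` in `ℝ[q]`. -/
theorem det_expDist_tree {n : ℕ} (G : SimpleGraph (Fin n)) (hG : G.IsTree) :
    (expDist G (Polynomial.X : Polynomial ℝ)).det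
      = (1 - Polynomial.X ^ 2) ^ (n - 1) := by
  rw [SimpleGraph.expDist_eq_expDistMatrix, hG.det_expDistMatrix, Fintype.card_fin]
end

section
/- Let n ≥ 2 and λ = (k, 1^{n-k}) be a hook partition of n. Then for 0 ≤ i ≤ ⌊n/2⌋, Σ_{j=0}^{i} χ_λ(j) · C(i,j) = C(n-i-1, k-i-1) · 2^i, where χ_λ(j) is the value of the irreducible character χ_λ of S_n on a permutation of cycle type 2^j 1^{n-2j}. -/
open Finset

/-- Irreducible character of `Sₙ` indexed by the partition `lam`, via the
Frobenius character formula. -/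
noncomputable def chiPart (n : ℕ) (lam : Fin n → ℕ) (σ : Equiv.Perm (Fin n)) : ℤ :=
  MvPolynomial.coeff (Finsupp.equivFunOnFinite.symm fun i => lam i + (n - 1 - (i : ℕ)))
    ((∏ i : Fin n, ∏ j ∈ Finset.univ.filter (fun j => i < j),
        (MvPolynomial.X i - MvPolynomial.X j : MvPolynomial (Fin n) ℤ)) *
      ((σ.cycleType.map fun c =>
          ∑ i : Fin n, (MvPolynomial.X i : MvPolynomial (Fin n) ℤ) ^ c).prod *
        (∑ i : Fin n, (MvPolynomial.X i : MvPolynomial (Fin n) ℤ)) ^ (n - σ.cycleType.sum)))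

/-- The hook partition `(k, 1^(n-k))` of `n`. -/
def hookPart (n k : ℕ) : Fin n → ℕ :=
  fun i => if (i : ℕ) = 0 then k else if (i : ℕ) ≤ n - k then 1 else 0

/-!
By the Frobenius formula, `χ_λ(μ)` is the coefficient of `x^(λ + δ)` in `Δ · p_μ`, where `Δ` is
the Vandermonde product. Multiplying by a power sum `p_m` lowers one exponent by `m`; since
`Δ · f` is antisymmetric for symmetric `f`, every lowering that produces a repeated exponent
contributes nothing. For a hook only two lowerings survive (Murnaghan–Nakayama), which yields
`χ_(k,1^r)(2^b 1^a) = [t^r] (1 - t)^b (1 + t)^(a+b-1)`. Weighted by `C(i,j)`, the binomial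
theorem collapses `∑ⱼ C(i,j) (1 - t)^j (1 + t)^(i-j)` to `2^i`, leaving
`2^i [t^(n-k)] (1 + t)^(n-1-i)`.
-/

open MvPolynomial
open scoped MonomialOrder

namespace MvPolynomial

variable {R : Type*} [CommRing R] {n : ℕ}

noncomputable def vandermondeProd (n : ℕ) (R : Type*) [CommRing R] : MvPolynomial (Fin n) R :=
  ∏ i : Fin n, ∏ j ∈ Finset.univ.filter (fun j => i < j), (X i - X j)

theorem vandermondeProd_eq_det :
    vandermondeProd n R = (-1) ^ (∑ i : Fin n, (Finset.Ioi i).card) *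
      (Matrix.vandermonde fun i => (X i : MvPolynomial (Fin n) R)).det := by
  rw [Matrix.det_vandermonde, vandermondeProd, ← Finset.prod_pow_eq_pow_sum,
    ← Finset.prod_mul_distrib]
  refine Finset.prod_congr rfl fun i _ => ?_
  rw [← Finset.prod_const, ← Finset.prod_mul_distrib, Finset.filter_lt_eq_Ioi]
  exact Finset.prod_congr rfl fun j _ => by ring

theorem rename_vandermondeProd (e : Equiv.Perm (Fin n)) :
    rename e (vandermondeProd n R) = Equiv.Perm.sign e • vandermondeProd n R := by
  have hV : (Matrix.vandermonde fun i => (X i : MvPolynomial (Fin n) R)).map (rename e) =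
      (Matrix.vandermonde fun i => (X i : MvPolynomial (Fin n) R)).submatrix e id := by
    ext i j
    simp [Matrix.vandermonde]
  rw [vandermondeProd_eq_det, map_mul, map_pow, map_neg, map_one, ← AlgHom.coe_toRingHom,
    RingHom.map_det, RingHom.mapMatrix_apply, AlgHom.coe_toRingHom, hV, Matrix.det_permute,
    Units.smul_def, zsmul_eq_mul]
  ring

theorem coeff_vandermondeProd_staircase :
    coeff (Finsupp.equivFunOnFinite.symm fun i : Fin n => n - 1 - i) (vandermondeProd n R) = 1 := by
  nontriviality R
  -- In the lex order each factor `X i - X j` (`i < j`) is monic with leading monomial `X i`.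
  let m : MonomialOrder (Fin n) := MonomialOrder.lex
  have hfactor : ∀ i j : Fin n, i < j → m.Monic (X i - X j : MvPolynomial (Fin n) R) ∧
      m.degree (X i - X j : MvPolynomial (Fin n) R) = Finsupp.single i 1 := by
    intro i j hij
    have hlt : m.degree (R := R) (X j) ≺[m] m.degree (R := R) (X i) := by
      rw [m.degree_X (R := R), m.degree_X (R := R), MonomialOrder.lex_lt_iff]
      exact Finsupp.Lex.single_lt_iff.2 hij
    refine ⟨?_, by rw [m.degree_sub_of_lt hlt, m.degree_X]⟩
    rw [MonomialOrder.Monic, m.leadingCoeff_sub_of_lt hlt, m.leadingCoeff_X]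
  have hmonic : m.Monic (vandermondeProd n R) :=
    MonomialOrder.Monic.prod fun i _ => MonomialOrder.Monic.prod fun j hj =>
      (hfactor i j (Finset.mem_filter.1 hj).2).1
  have hdeg : m.degree (vandermondeProd n R) =
      Finsupp.equivFunOnFinite.symm fun i : Fin n => n - 1 - i := by
    have hreg : ∀ {ι : Type} (s : Finset ι) (P : ι → MvPolynomial (Fin n) R),
        (∀ i ∈ s, m.Monic (P i)) → m.degree (∏ i ∈ s, P i) = ∑ i ∈ s, m.degree (P i) :=
      fun s P h => m.degree_prod_of_regular fun i hi =>
        (h i hi).leadingCoeff_eq_one ▸ isRegular_one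
    rw [vandermondeProd, hreg _ _ fun i _ => MonomialOrder.Monic.prod fun j hj =>
      (hfactor i j (Finset.mem_filter.1 hj).2).1]
    simp_rw [hreg _ _ fun j hj => (hfactor _ j (Finset.mem_filter.1 hj).2).1]
    ext p
    rw [Finset.sum_congr rfl fun i _ => Finset.sum_congr rfl fun j hj =>
      (hfactor i j (Finset.mem_filter.1 hj).2).2]
    rw [Finsupp.finsetSum_apply, Finset.sum_eq_single p (fun i _ hi => by simp [hi]) (by simp)]
    simp [Finset.filter_lt_eq_Ioi]
  rw [← hdeg]
  exact hmonic.coeff_degree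

theorem coeff_rename_perm {σ : Type*} [Finite σ] (e : Equiv.Perm σ) (p : MvPolynomial σ R)
    (v : σ → ℕ) :
    coeff (Finsupp.equivFunOnFinite.symm v) (rename e p) =
      coeff (Finsupp.equivFunOnFinite.symm (v ∘ e)) p := by
  rw [← coeff_rename_mapDomain e e.injective p (Finsupp.equivFunOnFinite.symm (v ∘ e))]
  congr 1
  ext x
  simp [Finsupp.mapDomain_equiv_apply]

theorem coeff_mul_psum {σ : Type*} [Fintype σ] [DecidableEq σ] (q : MvPolynomial σ R) (m : ℕ)
    (v : σ → ℕ) :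
    coeff (Finsupp.equivFunOnFinite.symm v) (q * psum σ R m) =
      ∑ t, if m ≤ v t then coeff (Finsupp.equivFunOnFinite.symm (Function.update v t (v t - m))) q
        else 0 := by
  simp only [psum, Finset.mul_sum, coeff_sum, X_pow_eq_monomial, coeff_mul_monomial', mul_one]
  refine Finset.sum_congr rfl fun t _ => ?_
  congr 1
  · simp [Finsupp.single_le_iff]
  · congr 1
    ext x
    rcases eq_or_ne x t with rfl | hx <;> simp [Function.update, *]

theorem IsSymmetric.pow {σ : Type*} {φ : MvPolynomial σ R} (hφ : φ.IsSymmetric) (k : ℕ) :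
    (φ ^ k).IsSymmetric :=
  fun e => by rw [map_pow, hφ e]

section Alternant

variable {f : MvPolynomial (Fin n) R}

theorem coeff_vandermondeProd_mul_comp_swap (hf : f.IsSymmetric) (v : Fin n → ℕ) {x y : Fin n}
    (hxy : x ≠ y) :
    coeff (Finsupp.equivFunOnFinite.symm (v ∘ Equiv.swap x y)) (vandermondeProd n R * f) =
      -coeff (Finsupp.equivFunOnFinite.symm v) (vandermondeProd n R * f) := by
  rw [← coeff_rename_perm, map_mul, rename_vandermondeProd, hf, Equiv.Perm.sign_swap hxy,
    Units.neg_smul, one_smul, neg_mul, coeff_neg]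

theorem coeff_vandermondeProd_mul_eq_zero [IsAddTorsionFree R] (hf : f.IsSymmetric)
    {v : Fin n → ℕ} {x y : Fin n} (hxy : x ≠ y) (hv : v x = v y) :
    coeff (Finsupp.equivFunOnFinite.symm v) (vandermondeProd n R * f) = 0 := by
  have hswap : v ∘ Equiv.swap x y = v := by
    ext z
    rcases eq_or_ne z x with rfl | hzx
    · simp [hv]
    rcases eq_or_ne z y with rfl | hzy
    · simp [hv]
    · simp [Equiv.swap_apply_of_ne_of_ne hzx hzy]
  have := coeff_vandermondeProd_mul_comp_swap hf v hxy
  rw [hswap] at this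
  exact self_eq_neg.1 this

end Alternant

end MvPolynomial

/-- `λ + δ` for the hook `λ = (k, 1^r)` with `n` parts and `δ = (n - 1, …, 1, 0)`: the exponent
`n - 1 + k` followed by `{0, …, n - 1} \ {n - 1 - r}` in decreasing order. -/
def hookExp (n k r : ℕ) : Fin n → ℕ := fun p =>
  if (p : ℕ) = 0 then n - 1 + k else if (p : ℕ) ≤ r then n - p else n - 1 - p

/-- By the Frobenius formula, `hookCoeff p_μ k r = χ_(k,1^r)(μ)`. -/
noncomputable def hookCoeff {n : ℕ} (f : MvPolynomial (Fin n) ℤ) (k r : ℕ) : ℤ :=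
  coeff (Finsupp.equivFunOnFinite.symm (hookExp n k r)) (vandermondeProd n ℤ * f)

section HookExp

variable {n k r : ℕ}

theorem hookExp_zero (hn : 0 < n) : hookExp n k r ⟨0, hn⟩ = n - 1 + k := rfl

theorem hookExp_of_le {p : ℕ} (hp : p ≠ 0) (hpr : p ≤ r) (hpn : p < n) :
    hookExp n k r ⟨p, hpn⟩ = n - p := by
  simp [hookExp, hp, hpr]

theorem hookExp_zero_zero : hookExp n 0 0 = fun p : Fin n => n - 1 - (p : ℕ) := by
  funext p
  simp only [hookExp]
  split_ifs <;> omega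

theorem exists_hookExp_eq (hr : r < n) {w : ℕ} (hw : w < n) (hgap : w ≠ n - 1 - r) :
    ∃ y, hookExp n k r y = w := by
  by_cases hwr : n - 1 - r < w
  · exact ⟨⟨n - w, by omega⟩, by simp only [hookExp]; split_ifs <;> omega⟩
  · exact ⟨⟨n - 1 - w, by omega⟩, by simp only [hookExp]; split_ifs <;> omega⟩

theorem update_hookExp_zero (hn : 0 < n) {m : ℕ} (hm : m ≤ k) :
    Function.update (hookExp n k r) ⟨0, hn⟩ (hookExp n k r ⟨0, hn⟩ - m) =
      hookExp n (k - m) r := by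
  funext p
  simp only [Function.update_apply, hookExp, Fin.ext_iff]
  split_ifs <;> omega

theorem update_hookExp_one (hr : 1 ≤ r) (hrn : r < n) :
    Function.update (hookExp n k r) ⟨r, hrn⟩ (hookExp n k r ⟨r, hrn⟩ - 1) =
      hookExp n k (r - 1) := by
  funext p
  simp only [Function.update_apply, hookExp, Fin.ext_iff]
  split_ifs <;> omega

theorem update_hookExp_two (hr : 2 ≤ r) (hrn : r < n) :
    Function.update (hookExp n k r) ⟨r - 1, by omega⟩ (hookExp n k r ⟨r - 1, by omega⟩ - 2) =
      hookExp n k (r - 2) ∘ Equiv.swap ⟨r - 1, by omega⟩ ⟨r, hrn⟩ := by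
  funext p
  simp only [Function.update_apply, hookExp, Function.comp, Equiv.swap_apply_def, Fin.ext_iff]
  split_ifs <;> simp_all <;> omega

theorem update_hookExp_one_one (hn : 1 < n) :
    Function.update (hookExp n 1 1) ⟨0, by omega⟩ (hookExp n 1 1 ⟨0, by omega⟩ - 2) =
      hookExp n 0 0 ∘ Equiv.swap ⟨0, by omega⟩ ⟨1, hn⟩ := by
  funext p
  simp only [Function.update_apply, hookExp, Function.comp, Equiv.swap_apply_def, Fin.ext_iff]
  split_ifs <;> simp_all
  omega

end HookExp

section HookCoeff

variable {n k r : ℕ} {f : MvPolynomial (Fin n) ℤ}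

theorem coeff_update_hookExp_eq_zero (hf : f.IsSymmetric) (hr : r < n) {t : Fin n} {w : ℕ}
    (hw : w < n) (hgap : w ≠ n - 1 - r) (ht : w ≠ hookExp n k r t) :
    coeff (Finsupp.equivFunOnFinite.symm (Function.update (hookExp n k r) t w))
      (vandermondeProd n ℤ * f) = 0 := by
  obtain ⟨y, hy⟩ := exists_hookExp_eq (k := k) hr hw hgap
  have hyt : y ≠ t := by rintro rfl; exact ht hy.symm
  refine coeff_vandermondeProd_mul_eq_zero hf hyt.symm ?_
  rw [Function.update_self, Function.update_of_ne hyt, hy]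

noncomputable def hookTerm (f : MvPolynomial (Fin n) ℤ) (k r m : ℕ) (t : Fin n) : ℤ :=
  if m ≤ hookExp n k r t then
    coeff (Finsupp.equivFunOnFinite.symm
      (Function.update (hookExp n k r) t (hookExp n k r t - m))) (vandermondeProd n ℤ * f)
  else 0

theorem hookCoeff_mul_psum (f : MvPolynomial (Fin n) ℤ) (k r m : ℕ) :
    hookCoeff (f * psum (Fin n) ℤ m) k r = ∑ t, hookTerm f k r m t := by
  rw [hookCoeff, ← mul_assoc, coeff_mul_psum]
  rfl

/-- Lowering any exponent but the first by `m` repeats another exponent, unless it lands exactly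
in the gap `n - 1 - r`. -/
theorem hookTerm_eq_zero (hf : f.IsSymmetric) (hr : r < n) {m : ℕ} (hm : 1 ≤ m) {t : Fin n}
    (ht : (t : ℕ) ≠ 0) (hts : (t : ℕ) + m ≠ r + 1) : hookTerm f k r m t = 0 := by
  have hv : hookExp n k r t = if (t : ℕ) ≤ r then n - t else n - 1 - t := by
    simp [hookExp, ht]
  rw [hookTerm]
  split_ifs with hmt
  · apply coeff_update_hookExp_eq_zero hf hr <;> split_ifs at hv <;> omega
  · rfl

theorem hookCoeff_mul_psum_eq_add (hf : f.IsSymmetric) (hr : r < n) {m : ℕ} (hm : 1 ≤ m)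
    {s : Fin n} (hs0 : (s : ℕ) ≠ 0) (hs : (s : ℕ) + m = r + 1) :
    hookCoeff (f * psum (Fin n) ℤ m) k r = hookTerm f k r m ⟨0, by omega⟩ + hookTerm f k r m s := by
  rw [hookCoeff_mul_psum,
    Fintype.sum_eq_add ⟨0, by omega⟩ s (Fin.ne_of_val_ne (Ne.symm hs0)) fun t ht => ?_]
  simp only [ne_eq, Fin.ext_iff] at ht
  exact hookTerm_eq_zero hf hr hm ht.1 (by omega)

theorem hookCoeff_mul_psum_eq_single (hf : f.IsSymmetric) (hr : r < n) {m : ℕ} (hm : 1 ≤ m)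
    (hmr : r < m) : hookCoeff (f * psum (Fin n) ℤ m) k r = hookTerm f k r m ⟨0, by omega⟩ := by
  rw [hookCoeff_mul_psum, Fintype.sum_eq_single _ fun t ht => ?_]
  simp only [ne_eq, Fin.ext_iff] at ht
  exact hookTerm_eq_zero hf hr hm ht (by omega)

theorem hookTerm_zero (hn : 0 < n) {m : ℕ} (hm : m ≤ k) :
    hookTerm f k r m ⟨0, hn⟩ = hookCoeff f (k - m) r := by
  rw [hookTerm, if_pos (by rw [hookExp_zero]; omega), update_hookExp_zero hn hm, hookCoeff]

theorem hookCoeff_zero_left (hf : f.IsSymmetric) (hr : 1 ≤ r) (hrn : r < n) :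
    hookCoeff f 0 r = 0 :=
  coeff_vandermondeProd_mul_eq_zero hf (x := ⟨0, by omega⟩) (y := ⟨1, by omega⟩)
    (by simp [Fin.ext_iff]) (by simp [hookExp]; omega)

theorem hookCoeff_mul_psum_one (hf : f.IsSymmetric) (hk : 1 ≤ k) (hr : r < n) :
    hookCoeff (f * psum (Fin n) ℤ 1) k r =
      hookCoeff f (k - 1) r + if 1 ≤ r then hookCoeff f k (r - 1) else 0 := by
  split_ifs with hr1
  · rw [hookCoeff_mul_psum_eq_add hf hr le_rfl (s := ⟨r, hr⟩) (by dsimp only; omega) rfl,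
      hookTerm_zero _ hk, hookTerm, if_pos (by rw [hookExp_of_le (by omega) le_rfl]; omega),
      update_hookExp_one hr1 hr]
    rfl
  · rw [hookCoeff_mul_psum_eq_single hf hr le_rfl (by omega), hookTerm_zero _ hk, add_zero]

theorem hookCoeff_mul_psum_two (hf : f.IsSymmetric) (hk : 2 ≤ k) (hr : r < n) :
    hookCoeff (f * psum (Fin n) ℤ 2) k r =
      hookCoeff f (k - 2) r - if 2 ≤ r then hookCoeff f k (r - 2) else 0 := by
  split_ifs with hr2
  · rw [hookCoeff_mul_psum_eq_add hf hr (by norm_num) (s := ⟨r - 1, by omega⟩)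
        (by dsimp only; omega) (by dsimp only; omega),
      hookTerm_zero _ hk, hookTerm, if_pos (by rw [hookExp_of_le (by omega) (by omega)]; omega),
      update_hookExp_two hr2 hr,
      coeff_vandermondeProd_mul_comp_swap hf _ (Fin.ne_of_val_ne (by dsimp only; omega)),
      sub_eq_add_neg]
    rfl
  · rw [hookCoeff_mul_psum_eq_single hf hr (by norm_num) (by omega), hookTerm_zero _ hk,
      sub_zero]

theorem hookCoeff_one_mul_psum_two (hf : f.IsSymmetric) (hr : 1 ≤ r) (hrn : r < n) :
    hookCoeff (f * psum (Fin n) ℤ 2) 1 r =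
      -if r = 1 then hookCoeff f 0 0 else hookCoeff f 1 (r - 2) := by
  have h0 : 2 ≤ hookExp n 1 r ⟨0, by omega⟩ := by rw [hookExp_zero]; omega
  split_ifs with hr1
  · subst hr1
    rw [hookCoeff_mul_psum_eq_single hf hrn (by norm_num) (by omega), hookTerm, if_pos h0,
      update_hookExp_one_one hrn,
      coeff_vandermondeProd_mul_comp_swap hf _ (Fin.ne_of_val_ne (by dsimp only; omega)),
      hookCoeff]
  · have hr2 : 2 ≤ r := by omega
    rw [hookCoeff_mul_psum_eq_add hf hrn (by norm_num) (s := ⟨r - 1, by omega⟩)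
        (by dsimp only; omega) (by dsimp only; omega),
      hookTerm, hookTerm, if_pos h0, if_pos (by rw [hookExp_of_le (by omega) (by omega)]; omega),
      update_hookExp_two hr2 hrn,
      coeff_vandermondeProd_mul_comp_swap hf _ (Fin.ne_of_val_ne (by dsimp only; omega)),
      coeff_update_hookExp_eq_zero hf hrn (by rw [hookExp_zero]; omega)
        (by rw [hookExp_zero]; omega) (by rw [hookExp_zero]; omega),
      hookCoeff, zero_add]

end HookCoeff

noncomputable def hookPoly (a b : ℕ) : Polynomial ℤ :=
  (1 - Polynomial.X) ^ b * (1 + Polynomial.X) ^ (a + b - 1)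

section HookPoly

variable {a b : ℕ}

theorem hookPoly_succ_left (hab : a + b ≠ 0) :
    hookPoly (a + 1) b = hookPoly a b + hookPoly a b * Polynomial.X ^ 1 := by
  rw [hookPoly, hookPoly, show a + 1 + b - 1 = a + b - 1 + 1 by omega]
  ring

theorem hookPoly_succ_right (hab : a + b ≠ 0) :
    hookPoly a (b + 1) = hookPoly a b - hookPoly a b * Polynomial.X ^ 2 := by
  rw [hookPoly, hookPoly, show a + (b + 1) - 1 = a + b - 1 + 1 by omega]
  ring

theorem coeff_hookPoly_eq_zero (hab : a + b ≠ 0) {r : ℕ} (hr : a + 2 * b ≤ r) :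
    (hookPoly a b).coeff r = 0 := by
  refine Polynomial.coeff_eq_zero_of_natDegree_lt ?_
  calc (hookPoly a b).natDegree ≤ b * 1 + (a + b - 1) * 1 := by
        refine (Polynomial.natDegree_mul_le).trans (add_le_add ?_ ?_) <;>
          refine Polynomial.natDegree_pow_le_of_le _ ?_
        · exact (Polynomial.natDegree_sub_le _ _).trans (by simp)
        · exact (Polynomial.natDegree_add_le _ _).trans (by simp)
    _ < r := by omega

end HookPoly

section HookFormula

variable {n a b : ℕ}

theorem isSymmetric_psum_pow_mul_psum_pow (a b : ℕ) :
    (psum (Fin n) ℤ 1 ^ a * psum (Fin n) ℤ 2 ^ b).IsSymmetric :=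
  ((psum_isSymmetric _ _ 1).pow a).mul ((psum_isSymmetric _ _ 2).pow b)

def HookFormula (n a b : ℕ) : Prop :=
  ∀ k r, k + r = a + 2 * b → r < n →
    hookCoeff (psum (Fin n) ℤ 1 ^ a * psum (Fin n) ℤ 2 ^ b) k r = (hookPoly a b).coeff r

theorem hookCoeff_psum_pow_zero_left (hab : a + b ≠ 0) {r : ℕ} (hr : a + 2 * b ≤ r)
    (hrn : r < n) :
    hookCoeff (psum (Fin n) ℤ 1 ^ a * psum (Fin n) ℤ 2 ^ b) 0 r = (hookPoly a b).coeff r := by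
  rw [hookCoeff_zero_left (isSymmetric_psum_pow_mul_psum_pow a b) (by omega) hrn,
    coeff_hookPoly_eq_zero hab hr]

theorem hookFormula_zero_zero : HookFormula n 0 0 := by
  intro k r hkr hr
  obtain ⟨rfl, rfl⟩ : k = 0 ∧ r = 0 := by omega
  simp [hookCoeff, hookExp_zero_zero, coeff_vandermondeProd_staircase, hookPoly]

theorem HookFormula.succ_left (ih : HookFormula n a b) : HookFormula n (a + 1) b := by
  intro k r hkr hr
  rcases Nat.eq_zero_or_pos k with rfl | hk
  · exact hookCoeff_psum_pow_zero_left (by omega) (by omega) hr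
  rw [show psum (Fin n) ℤ 1 ^ (a + 1) * psum (Fin n) ℤ 2 ^ b =
      psum (Fin n) ℤ 1 ^ a * psum (Fin n) ℤ 2 ^ b * psum (Fin n) ℤ 1 by ring,
    hookCoeff_mul_psum_one (isSymmetric_psum_pow_mul_psum_pow a b) hk hr,
    ih (k - 1) r (by omega) hr]
  rcases Nat.eq_zero_or_pos (a + b) with hab | hab
  · obtain ⟨rfl, rfl, rfl, rfl⟩ : k = 1 ∧ r = 0 ∧ a = 0 ∧ b = 0 := by omega
    simp [hookPoly]
  rw [hookPoly_succ_left (by omega), Polynomial.coeff_add, Polynomial.coeff_mul_X_pow']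
  split_ifs with hr1
  · rw [ih k (r - 1) (by omega) (by omega)]
  · rfl

theorem HookFormula.succ_right (ih : HookFormula n a b) : HookFormula n a (b + 1) := by
  intro k r hkr hr
  have hpow : psum (Fin n) ℤ 1 ^ a * psum (Fin n) ℤ 2 ^ (b + 1) =
      psum (Fin n) ℤ 1 ^ a * psum (Fin n) ℤ 2 ^ b * psum (Fin n) ℤ 2 := by ring
  have hsym := isSymmetric_psum_pow_mul_psum_pow (n := n) a b
  rcases Nat.lt_trichotomy k 1 with hk | rfl | hk
  · obtain rfl : k = 0 := by omega
    exact hookCoeff_psum_pow_zero_left (by omega) (by omega) hr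
  · rw [hpow, hookCoeff_one_mul_psum_two hsym (by omega) hr]
    split_ifs with hr1
    · obtain ⟨rfl, rfl, rfl⟩ : r = 1 ∧ a = 0 ∧ b = 0 := by omega
      rw [ih 0 0 rfl (by omega)]
      simp [hookPoly, Polynomial.coeff_one]
    · rw [ih 1 (r - 2) (by omega) (by omega), hookPoly_succ_right (by omega),
        Polynomial.coeff_sub, Polynomial.coeff_mul_X_pow', if_pos (by omega),
        coeff_hookPoly_eq_zero (r := r) (by omega) (by omega), zero_sub]
  · rw [hpow, hookCoeff_mul_psum_two hsym (by omega) hr, ih (k - 2) r (by omega) hr]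
    rcases Nat.eq_zero_or_pos (a + b) with hab | hab
    · obtain ⟨rfl, rfl, rfl, rfl⟩ : k = 2 ∧ r = 0 ∧ a = 0 ∧ b = 0 := by omega
      simp [hookPoly]
    rw [hookPoly_succ_right (by omega), Polynomial.coeff_sub, Polynomial.coeff_mul_X_pow']
    split_ifs with hr2
    · rw [ih k (r - 2) (by omega) (by omega)]
    · rfl

theorem hookFormula (a b : ℕ) : HookFormula n a b := by
  induction b with
  | zero =>
    induction a with
    | zero => exact hookFormula_zero_zero
    | succ a ih => exact ih.succ_left
  | succ b ih => exact ih.succ_right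

end HookFormula

theorem sum_choose_mul_hookPoly {n i : ℕ} (hi : 2 * i ≤ n) :
    ∑ j ∈ Finset.range (i + 1), (i.choose j : Polynomial ℤ) * hookPoly (n - 2 * j) j =
      2 ^ i * (1 + Polynomial.X) ^ (n - 1 - i) := by
  have hsplit : ∀ j ∈ Finset.range (i + 1),
      (i.choose j : Polynomial ℤ) * hookPoly (n - 2 * j) j =
      (1 - Polynomial.X) ^ j * (1 + Polynomial.X) ^ (i - j) * (i.choose j : Polynomial ℤ) *
        (1 + Polynomial.X) ^ (n - 1 - i) := by
    intro j hj
    have hji := Finset.mem_range_succ_iff.1 hj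
    rw [hookPoly, show n - 2 * j + j - 1 = i - j + (n - 1 - i) by omega, pow_add]
    ring
  rw [Finset.sum_congr rfl hsplit, ← Finset.sum_mul, ← add_pow]
  norm_num

theorem chiPart_hookPart {n k j : ℕ} (hk1 : 1 ≤ k) (hkn : k ≤ n) {σ : Equiv.Perm (Fin n)}
    (hσ : σ.cycleType = Multiset.replicate j 2) :
    chiPart n (hookPart n k) σ = (hookPoly (n - 2 * j) j).coeff (n - k) := by
  have hj : 2 * j ≤ n := by
    simpa [hσ, mul_comm] using σ.sum_cycleType_le
  have hexp : (fun i : Fin n => hookPart n k i + (n - 1 - (i : ℕ))) = hookExp n k (n - k) := by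
    funext i
    simp only [hookPart, hookExp]
    split_ifs <;> omega
  rw [chiPart, hexp, hσ, Multiset.map_replicate, Multiset.prod_replicate, Multiset.sum_replicate,
    smul_eq_mul, ← hookFormula (n := n) (n - 2 * j) j k (n - k) (by omega) (by omega),
    hookCoeff]
  congr 2
  simp only [psum, pow_one]
  ring_nf

theorem chiPart_hook_binomial_sum_general {n k : ℕ} (hk1 : 1 ≤ k) (hkn : k ≤ n)
    (i : ℕ) (hi : i ≤ n / 2)
    (σ : ℕ → Equiv.Perm (Fin n))
    (hσ : ∀ j ≤ i, (σ j).cycleType = Multiset.replicate j 2) :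
    ∑ j ∈ Finset.range (i + 1), chiPart n (hookPart n k) (σ j) * (i.choose j : ℤ)
      = (if i < k then ((n - i - 1).choose (k - i - 1) : ℤ) else 0) * 2 ^ i := by
  calc ∑ j ∈ Finset.range (i + 1), chiPart n (hookPart n k) (σ j) * (i.choose j : ℤ)
      = ∑ j ∈ Finset.range (i + 1),
          ((i.choose j : Polynomial ℤ) * hookPoly (n - 2 * j) j).coeff (n - k) := by
        refine Finset.sum_congr rfl fun j hj => ?_
        rw [chiPart_hookPart hk1 hkn (hσ j (Finset.mem_range_succ_iff.1 hj)),
          Polynomial.coeff_natCast_mul, mul_comm]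
    _ = (2 ^ i * (1 + Polynomial.X) ^ (n - 1 - i) : Polynomial ℤ).coeff (n - k) := by
        rw [← Polynomial.finsetSum_coeff, sum_choose_mul_hookPoly (by omega)]
    _ = _ := by
        rw [show (2 : Polynomial ℤ) ^ i = Polynomial.C (2 ^ i) by simp, Polynomial.coeff_C_mul,
          Polynomial.coeff_one_add_X_pow, mul_comm]
        split_ifs with hik
        · rw [Nat.choose_symm_of_eq_add (show n - 1 - i = n - k + (k - i - 1) by omega),
            show n - i - 1 = n - 1 - i by omega]
        · rw [Nat.choose_eq_zero_of_lt (by omega), Nat.cast_zero]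

/-- For the hook `λ = (k, 1^(n-k))` and `0 ≤ i ≤ ⌊n/2⌋`,
`∑_{j=0}^{i} χ_λ(2^j 1^(n-2j)) C(i,j) = C(n-i-1, k-i-1) 2^i`, the binomial
coefficient being `0` when `k - i - 1 < 0`.  Here `σ j` is any permutation of
cycle type `2^j 1^(n-2j)`. -/
theorem chiPart_hook_binomial_sum {n k : ℕ} (hn : 2 ≤ n) (hk1 : 1 ≤ k) (hkn : k ≤ n)
    (i : ℕ) (hi : i ≤ n / 2)
    (σ : ℕ → Equiv.Perm (Fin n))
    (hσ : ∀ j ≤ i, (σ j).cycleType = Multiset.replicate j 2) :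
    ∑ j ∈ Finset.range (i + 1), chiPart n (hookPart n k) (σ j) * (i.choose j : ℤ)
      = (if i < k then ((n - i - 1).choose (k - i - 1) : ℤ) else 0) * 2 ^ i :=
  chiPart_hook_binomial_sum_general hk1 hkn i hi σ hσ
end

section
/- Let T be a tree on vertex set [n] with q-Laplacian L^q_T, and let λ ⊢ n and 0 ≤ r ≤ n. Writing d_λ(xI - L^q_T) = Σ_{r=0}^n (-1)^r c_{λ,r}(q) x^{n-r}, the coefficient satisfies c_{λ,r}(q) = Σ_{j=0}^{⌊r/2⌋} χ_λ(j) · m_{r,j}(q), where m_{r,j}(q) = Σ_{|B|=r} Σ_{M ∈ M_j(B)} q^{2j} Π_{v ∈ B \ V(M)} (1 + q^2(deg(v) - 1)), the inner sums being over j-edge matchings M of the forest induced by T on B. -/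
open Finset Polynomial

noncomputable def imman {n : ℕ} {R : Type*} [CommRing R] (χ : Equiv.Perm (Fin n) → R)
    (A : Matrix (Fin n) (Fin n) R) : R :=
  ∑ σ : Equiv.Perm (Fin n), χ σ * ∏ i, A i (σ i)

open scoped Classical in
/-- `M_j(B)`: the `j`-edge matchings of the forest induced by `G` on `B`,
viewed as `j`-sets of edges of `G` with all endpoints in `B` and pairwise
disjoint. -/
noncomputable def bMatchings {n : ℕ} (G : SimpleGraph (Fin n)) [DecidableRel G.Adj]
    (B : Finset (Fin n)) (j : ℕ) : Finset (Finset (Sym2 (Fin n))) :=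
  G.edgeFinset.powerset.filter fun M =>
    M.card = j ∧ (∀ e ∈ M, ∀ v, v ∈ e → v ∈ B) ∧
      ∀ e ∈ M, ∀ f ∈ M, e ≠ f → ∀ v : Fin n, ¬(v ∈ e ∧ v ∈ f)

open scoped Classical in
/-- `m_{B,j}(q) = ∑_{M ∈ M_j(B)} q^{2j} ∏_{v ∈ B \ V(M)} (1 + q²(deg v - 1))`. -/
noncomputable def mBj {n : ℕ} (G : SimpleGraph (Fin n)) [DecidableRel G.Adj]
    (B : Finset (Fin n)) (j : ℕ) : Polynomial ℝ :=
  ∑ M ∈ bMatchings G B j,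
    X ^ (2 * j) *
      ∏ v ∈ B.filter (fun v => ¬∃ e ∈ M, v ∈ e),
        (1 + X ^ 2 * ((G.degree v : Polynomial ℝ) - 1))

open scoped Classical in
/-- `m_{r,j}(q) = ∑_{|B| = r} m_{B,j}(q)`. -/
noncomputable def mrj {n : ℕ} (G : SimpleGraph (Fin n)) [DecidableRel G.Adj]
    (r j : ℕ) : Polynomial ℝ :=
  ∑ B ∈ Finset.univ.powerset.filter (fun B : Finset (Fin n) => B.card = r), mBj G B j

/-!
Expanding the immanant of `xI - L^q_T` over permutations, only the permutations `τ` that move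
every vertex to itself or to a neighbour contribute. In a tree such a `τ` is an involution (a
longer cycle of `τ` would trace a cycle in `T`), so it is the same thing as a matching `M` of `T`:
it has cycle type `2^|M| 1^(n-2|M|)` and contributes
`q^(2|M|) ∏_{v ∉ V(M)} (x - (1 + q²(deg v - 1)))`. The coefficient of `x^(n-r)` chooses `r - 2|M|`
further unmatched vertices, which together with `V(M)` form a set `B` with `|B| = r`.
-/

namespace SimpleGraph

variable {V : Type*} (G : SimpleGraph V)

def MovesAlongEdges (σ : Equiv.Perm V) : Prop :=
  ∀ v, σ v = v ∨ G.Adj v (σ v)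

instance [Fintype V] [DecidableEq V] [DecidableRel G.Adj] : DecidablePred G.MovesAlongEdges :=
  fun σ => inferInstanceAs (Decidable (∀ v, σ v = v ∨ G.Adj v (σ v)))

variable {G}

/-- If `σ (σ v) ≠ v`, the orbit `σ v, σ² v, …` returns to `v` without crossing the edge
`s(v, σ v)`, so that edge is not a bridge. -/
theorem IsAcyclic.involutive_of_movesAlongEdges [Finite V] (hG : G.IsAcyclic)
    {σ : Equiv.Perm V} (hσ : G.MovesAlongEdges σ) : Function.Involutive σ := by
  intro v
  by_contra hv2
  have hadj : G.Adj v (σ v) := (hσ v).resolve_left fun h => hv2 (by rw [h, h])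
  let H := G.deleteEdges {s(v, σ v)}
  have hreach : ∀ m : ℕ, H.Reachable (σ v) ((σ ^ (m + 1)) v) := by
    intro m
    induction m with
    | zero => simp
    | succ m ih =>
      rw [pow_succ', Equiv.Perm.mul_apply]
      generalize (σ ^ (m + 1)) v = w at ih ⊢
      rcases hσ w with hw | hw
      · rwa [hw]
      by_cases he : s(w, σ w) = s(v, σ v)
      · rcases Sym2.eq_iff.1 he with ⟨-, h⟩ | ⟨hw, h⟩
        · rw [h]
        · exact absurd (hw ▸ h) hv2
      · exact ih.trans (Adj.reachable (deleteEdges_adj.2 ⟨hw, Set.mem_singleton_iff.not.2 he⟩))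
  have hret := hreach (orderOf σ - 1)
  rw [Nat.sub_add_cancel (orderOf_pos σ), pow_orderOf_eq_one, Equiv.Perm.one_apply] at hret
  exact isAcyclic_iff_forall_adj_isBridge.1 hG hadj hret.symm

end SimpleGraph

theorem Function.Involutive.perm_sq_eq_one {α : Type*} {σ : Equiv.Perm α}
    (hσ : Function.Involutive σ) : σ ^ 2 = 1 :=
  Equiv.ext hσ

theorem Equiv.Perm.cycleType_of_involutive {α : Type*} [Fintype α] [DecidableEq α]
    {σ : Equiv.Perm α} (hσ : Function.Involutive σ) :
    σ.cycleType = Multiset.replicate (#σ.support / 2) 2 := by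
  have hrep := cycleType_of_pow_prime_eq_one (p := 2) hσ.perm_sq_eq_one
  have hsum := σ.sum_cycleType
  rw [hrep, Multiset.sum_replicate, smul_eq_mul] at hsum
  rwa [← hsum, Nat.mul_div_cancel _ two_pos]

theorem Polynomial.coeff_prod_X_sub_C {R ι : Type*} [CommRing R] (s : Finset ι) (a : ι → R)
    (k : ℕ) :
    (∏ i ∈ s, (X - C (a i))).coeff k =
      ∑ t ∈ s.powerset with #t + k = #s, (-1) ^ #t * ∏ i ∈ t, a i := by
  classical
  simp_rw [sub_eq_neg_add, ← map_neg, Finset.prod_add, Finset.prod_const, finsetSum_coeff,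
    ← map_prod, coeff_C_mul_X_pow, Finset.sum_filter]
  refine Finset.sum_congr rfl fun t ht => ?_
  have hts := Finset.mem_powerset.1 ht
  have := Finset.card_le_card hts
  rw [Finset.card_sdiff_of_subset hts, Finset.prod_neg]
  split_ifs <;> first | rfl | omega

theorem Finset.sum_sum_powerset_compl_eq {ι V β : Type*} [Fintype V] [DecidableEq V]
    [AddCommMonoid β] (A : Finset ι) (s : ι → Finset V) (r : ℕ) (F : ι → Finset V → β) :
    ∑ a ∈ A, ∑ t ∈ (s a)ᶜ.powerset with #t + #(s a) = r, F a t =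
      ∑ B ∈ univ.powerset with #B = r, ∑ a ∈ A with s a ⊆ B, F a (B \ s a) := by
  have hsplit (a : ι) : ∑ t ∈ (s a)ᶜ.powerset with #t + #(s a) = r, F a t =
      ∑ B ∈ univ.powerset with #B = r ∧ s a ⊆ B, F a (B \ s a) := by
    refine Finset.sum_nbij' (· ∪ s a) (· \ s a) ?_ ?_ ?_ ?_ ?_ <;>
      simp only [Finset.mem_filter, Finset.mem_powerset, Finset.subset_compl_iff_disjoint_right,
        Finset.subset_univ, true_and, and_imp]
    · intro t ht hcard
      exact ⟨by rwa [Finset.card_union_of_disjoint ht], Finset.subset_union_right⟩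
    · intro B _ hsB
      have := Finset.card_le_card hsB
      exact ⟨Finset.sdiff_disjoint, by rw [Finset.card_sdiff_of_subset hsB]; omega⟩
    · intro t ht _
      exact Finset.union_sdiff_cancel_right ht
    · intro B _ hsB
      exact Finset.sdiff_union_of_subset hsB
    · intro t ht _
      rw [Finset.union_sdiff_cancel_right ht]
  rw [Finset.sum_congr rfl fun a _ => hsplit a]
  exact Finset.sum_comm' fun a B => by simp only [Finset.mem_filter]; tauto

section Matchings

variable {V : Type*} [Fintype V] [DecidableEq V] {G : SimpleGraph V}

def PairwiseDisjointEdges (M : Finset (Sym2 V)) : Prop :=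
  ∀ e ∈ M, ∀ f ∈ M, e ≠ f → ∀ v : V, ¬(v ∈ e ∧ v ∈ f)

def edgeVerts (M : Finset (Sym2 V)) : Finset V :=
  {v | ∃ e ∈ M, v ∈ e}

noncomputable def matchPartner (M : Finset (Sym2 V)) (v : V) : V :=
  if h : ∃ w, s(v, w) ∈ M then h.choose else v

def Equiv.Perm.movedPairs (σ : Equiv.Perm V) : Finset (Sym2 V) :=
  σ.support.image fun v => s(v, σ v)

theorem mem_edgeVerts {M : Finset (Sym2 V)} {v : V} : v ∈ edgeVerts M ↔ ∃ w, s(v, w) ∈ M := by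
  simp only [edgeVerts, Finset.mem_filter, Finset.mem_univ, true_and]
  constructor
  · rintro ⟨e, he, hv⟩
    obtain ⟨w, rfl⟩ := Sym2.mem_iff_exists.mp hv
    exact ⟨w, he⟩
  · rintro ⟨w, hw⟩
    exact ⟨s(v, w), hw, Sym2.mem_mk_left _ _⟩

theorem edgeVerts_subset_iff {M : Finset (Sym2 V)} {B : Finset V} :
    edgeVerts M ⊆ B ↔ ∀ e ∈ M, ∀ v ∈ e, v ∈ B := by
  simp only [edgeVerts, Finset.subset_iff, Finset.mem_filter, Finset.mem_univ, true_and]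
  exact ⟨fun h e he v hv => h ⟨e, he, hv⟩, fun h v ⟨e, he, hv⟩ => h e he v hv⟩

theorem card_edgeVerts {M : Finset (Sym2 V)} (hMG : ↑M ⊆ G.edgeSet)
    (hM : PairwiseDisjointEdges M) : #(edgeVerts M) = 2 * #M := by
  have hV : edgeVerts M = M.biUnion fun e => {v | v ∈ e} := by
    ext v
    simp [edgeVerts]
  rw [hV, Finset.card_biUnion fun e he f hf hef =>
    Finset.disjoint_filter.2 fun v _ hve hvf => hM e he f hf hef v ⟨hve, hvf⟩]
  rw [Finset.sum_const_nat fun e he => ?_, mul_comm]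
  induction e with
  | _ a b =>
    have hab : a ≠ b := (hMG he : G.Adj a b).ne
    rw [show ({v | v ∈ s(a, b)} : Finset V) = {a, b} by ext; simp, Finset.card_pair hab]

section MatchPartner

variable {M : Finset (Sym2 V)}

theorem matchPartner_eq (hM : PairwiseDisjointEdges M) {v w : V} (h : s(v, w) ∈ M) :
    matchPartner M v = w := by
  have hex : ∃ w, s(v, w) ∈ M := ⟨w, h⟩
  rw [matchPartner, dif_pos hex]
  by_contra hne
  exact hM _ hex.choose_spec _ h (mt Sym2.congr_right.1 hne) v
    ⟨Sym2.mem_mk_left _ _, Sym2.mem_mk_left _ _⟩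

theorem matchPartner_eq_self {v : V} (h : v ∉ edgeVerts M) : matchPartner M v = v :=
  dif_neg (mt mem_edgeVerts.2 h)

theorem matchPartner_involutive (hM : PairwiseDisjointEdges M) :
    Function.Involutive (matchPartner M) := by
  intro v
  by_cases h : v ∈ edgeVerts M
  · obtain ⟨w, hw⟩ := mem_edgeVerts.1 h
    rw [matchPartner_eq hM hw, matchPartner_eq hM (Sym2.eq_swap ▸ hw)]
  · rw [matchPartner_eq_self h, matchPartner_eq_self h]

variable (hMG : ↑M ⊆ G.edgeSet) (hM : PairwiseDisjointEdges M)
include hMG hM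

theorem matchPartner_ne_self_iff {v : V} : matchPartner M v ≠ v ↔ v ∈ edgeVerts M := by
  refine ⟨fun h => not_not.1 (mt matchPartner_eq_self h), fun h => ?_⟩
  obtain ⟨w, hw⟩ := mem_edgeVerts.1 h
  rw [matchPartner_eq hM hw]
  exact (hMG hw : G.Adj v w).ne.symm

theorem movesAlongEdges_toPerm_matchPartner :
    G.MovesAlongEdges (matchPartner_involutive hM).toPerm := by
  refine fun v => or_iff_not_imp_left.2 fun h => ?_
  obtain ⟨w, hw⟩ := mem_edgeVerts.1 ((matchPartner_ne_self_iff hMG hM).1 h)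
  rw [Function.Involutive.coe_toPerm, matchPartner_eq hM hw]
  exact hMG hw

theorem support_toPerm_matchPartner :
    (matchPartner_involutive hM).toPerm.support = edgeVerts M := by
  ext v
  exact Equiv.Perm.mem_support.trans (matchPartner_ne_self_iff hMG hM)

theorem movedPairs_toPerm_matchPartner : (matchPartner_involutive hM).toPerm.movedPairs = M := by
  ext e
  induction e with
  | _ v w =>
    simp only [Equiv.Perm.movedPairs, Finset.mem_image, support_toPerm_matchPartner hMG hM,
      Function.Involutive.coe_toPerm]
    constructor
    · rintro ⟨u, hu, hue⟩
      obtain ⟨x, hx⟩ := mem_edgeVerts.1 hu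
      rw [matchPartner_eq hM hx] at hue
      rwa [← hue]
    · intro h
      exact ⟨v, mem_edgeVerts.2 ⟨w, h⟩, by rw [matchPartner_eq hM h]⟩

end MatchPartner

section MovedPairs

theorem Equiv.Perm.movedPairs_subset_edgeSet {σ : Equiv.Perm V} (hσ : G.MovesAlongEdges σ) :
    ↑σ.movedPairs ⊆ G.edgeSet := by
  intro e he
  obtain ⟨v, hv, rfl⟩ := Finset.mem_image.1 he
  exact (hσ v).resolve_left (Equiv.Perm.mem_support.1 hv)

variable {σ : Equiv.Perm V} (hσ : Function.Involutive σ)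
include hσ

theorem mem_movedPairs {v w : V} : s(v, w) ∈ σ.movedPairs ↔ σ v ≠ v ∧ w = σ v := by
  simp only [Equiv.Perm.movedPairs, Finset.mem_image, Equiv.Perm.mem_support]
  constructor
  · rintro ⟨u, hu, he⟩
    rcases Sym2.eq_iff.1 he with ⟨rfl, rfl⟩ | ⟨rfl, rfl⟩
    · exact ⟨hu, rfl⟩
    · rw [hσ u]
      exact ⟨fun h => hu h.symm, rfl⟩
  · rintro ⟨hv, rfl⟩
    exact ⟨v, hv, rfl⟩

theorem pairwiseDisjointEdges_movedPairs : PairwiseDisjointEdges σ.movedPairs := by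
  intro e he f hf hef v ⟨hve, hvf⟩
  obtain ⟨w, rfl⟩ := Sym2.mem_iff_exists.1 hve
  obtain ⟨x, rfl⟩ := Sym2.mem_iff_exists.1 hvf
  rw [(mem_movedPairs hσ).1 he |>.2, (mem_movedPairs hσ).1 hf |>.2] at hef
  exact hef rfl

theorem edgeVerts_movedPairs : edgeVerts σ.movedPairs = σ.support := by
  ext v
  rw [mem_edgeVerts, Equiv.Perm.mem_support]
  exact ⟨fun ⟨w, hw⟩ => ((mem_movedPairs hσ).1 hw).1,
    fun h => ⟨σ v, (mem_movedPairs hσ).2 ⟨h, rfl⟩⟩⟩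

theorem matchPartner_movedPairs : matchPartner σ.movedPairs = σ := by
  funext v
  by_cases h : σ v = v
  · rw [matchPartner_eq_self (by rwa [edgeVerts_movedPairs hσ, Equiv.Perm.notMem_support]), h]
  · exact matchPartner_eq (pairwiseDisjointEdges_movedPairs hσ) ((mem_movedPairs hσ).2 ⟨h, rfl⟩)

end MovedPairs

theorem filter_not_exists_mem_eq_sdiff (B : Finset V) (M : Finset (Sym2 V))
    [DecidablePred fun v => ¬∃ e ∈ M, v ∈ e] :
    B.filter (fun v => ¬∃ e ∈ M, v ∈ e) = B \ edgeVerts M := by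
  ext v
  simp [edgeVerts]

end Matchings

section BMatchings

variable {n : ℕ} {G : SimpleGraph (Fin n)} [DecidableRel G.Adj]

open scoped Classical in
theorem mem_bMatchings {B : Finset (Fin n)} {j : ℕ} {M : Finset (Sym2 (Fin n))} :
    M ∈ bMatchings G B j ↔
      ↑M ⊆ G.edgeSet ∧ #M = j ∧ edgeVerts M ⊆ B ∧ PairwiseDisjointEdges M := by
  rw [bMatchings, Finset.mem_filter, Finset.mem_powerset, ← Finset.coe_subset,
    SimpleGraph.coe_edgeFinset, edgeVerts_subset_iff, PairwiseDisjointEdges]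

theorem sum_movesAlongEdges_eq_sum_bMatchings (hG : G.IsAcyclic) (B : Finset (Fin n)) (j : ℕ)
    {β : Type*} [AddCommMonoid β] (f : Finset (Fin n) → β) :
    ∑ τ : Equiv.Perm (Fin n) with G.MovesAlongEdges τ ∧ τ.support ⊆ B ∧ #τ.support = 2 * j,
        f τ.support =
      ∑ M ∈ bMatchings G B j, f (edgeVerts M) := by
  refine Finset.sum_bij' (fun τ _ => τ.movedPairs)
    (fun M hM => (matchPartner_involutive (mem_bMatchings.1 hM).2.2.2).toPerm) ?_ ?_ ?_ ?_ ?_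
  · intro τ hτ
    obtain ⟨hmove, hB, hcard⟩ := (Finset.mem_filter.1 hτ).2
    have hinv := hG.involutive_of_movesAlongEdges hmove
    have hsub := τ.movedPairs_subset_edgeSet hmove
    have hdisj := pairwiseDisjointEdges_movedPairs hinv
    have hverts := edgeVerts_movedPairs hinv
    refine mem_bMatchings.2 ⟨hsub, ?_, hverts ▸ hB, hdisj⟩
    have := card_edgeVerts hsub hdisj
    rw [hverts, hcard] at this
    omega
  · intro M hM
    obtain ⟨hsub, hcard, hB, hdisj⟩ := mem_bMatchings.1 hM
    rw [Finset.mem_filter, support_toPerm_matchPartner hsub hdisj, card_edgeVerts hsub hdisj]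
    exact ⟨Finset.mem_univ _, movesAlongEdges_toPerm_matchPartner hsub hdisj, hB, by rw [hcard]⟩
  · intro τ hτ
    exact Equiv.ext <| congrFun <|
      matchPartner_movedPairs (hG.involutive_of_movesAlongEdges (Finset.mem_filter.1 hτ).2.1)
  · intro M hM
    obtain ⟨hsub, -, -, hdisj⟩ := mem_bMatchings.1 hM
    exact movedPairs_toPerm_matchPartner hsub hdisj
  · intro τ hτ
    rw [edgeVerts_movedPairs (hG.involutive_of_movesAlongEdges (Finset.mem_filter.1 hτ).2.1)]

theorem sum_movesAlongEdges_eq_sum_range (hG : G.IsAcyclic) (B : Finset (Fin n))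
    {β : Type*} [AddCommMonoid β] (f : Equiv.Perm (Fin n) → β) :
    ∑ τ ∈ ({τ | G.MovesAlongEdges τ} : Finset (Equiv.Perm (Fin n))) with τ.support ⊆ B, f τ =
      ∑ j ∈ range (#B / 2 + 1), ∑ τ : Equiv.Perm (Fin n) with
        G.MovesAlongEdges τ ∧ τ.support ⊆ B ∧ #τ.support = 2 * j, f τ := by
  have hmaps : ∀ τ ∈ ({τ | G.MovesAlongEdges τ} : Finset (Equiv.Perm (Fin n))).filter
      (·.support ⊆ B), #τ.support / 2 ∈ range (#B / 2 + 1) := fun τ hτ =>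
    Finset.mem_range.2 (Nat.lt_succ_of_le (Nat.div_le_div_right
      (Finset.card_le_card (Finset.mem_filter.1 hτ).2)))
  rw [← Finset.sum_fiberwise_of_maps_to hmaps]
  refine Finset.sum_congr rfl fun j _ => ?_
  rw [Finset.filter_filter, Finset.filter_filter]
  refine Finset.sum_congr (Finset.filter_congr fun τ _ => ?_) fun _ _ => rfl
  constructor
  · rintro ⟨hmove, hB, hj⟩
    have := Equiv.Perm.two_dvd_card_support
      (hG.involutive_of_movesAlongEdges hmove).perm_sq_eq_one
    exact ⟨hmove, hB, by omega⟩
  · rintro ⟨hmove, hB, hj⟩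
    exact ⟨hmove, hB, by omega⟩

end BMatchings

section QLaplacian

open Matrix

variable {n : ℕ} (G : SimpleGraph (Fin n)) [DecidableRel G.Adj] {R : Type*} [CommRing R] (q : R)

theorem qLap_apply_self (i : Fin n) : qLap G q i i = 1 + q ^ 2 * ((G.degree i : R) - 1) :=
  if_pos rfl

theorem qLap_apply_of_ne {i j : Fin n} (h : i ≠ j) :
    qLap G q i j = if G.Adj i j then -q else 0 :=
  if_neg h

theorem prod_charmatrix_qLap (τ : Equiv.Perm (Fin n)) :
    ∏ i, charmatrix (qLap G q) i (τ i) =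
      if G.MovesAlongEdges τ then
        C (q ^ #τ.support) * ∏ i ∈ τ.supportᶜ, (X - C (1 + q ^ 2 * ((G.degree i : R) - 1)))
      else 0 := by
  split_ifs with hτ
  · rw [← Finset.prod_mul_prod_compl τ.support]
    congr 1
    · rw [map_pow, ← Finset.prod_const]
      refine Finset.prod_congr rfl fun i hi => ?_
      have hne := Equiv.Perm.mem_support.1 hi
      rw [charmatrix_apply_ne _ _ _ hne.symm, qLap_apply_of_ne G q hne.symm,
        if_pos ((hτ i).resolve_left hne), map_neg, neg_neg]
    · refine Finset.prod_congr rfl fun i hi => ?_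
      rw [Equiv.Perm.notMem_support.1 (Finset.mem_compl.1 hi), charmatrix_apply_eq,
        qLap_apply_self]
  · obtain ⟨v, hv, hadj⟩ := by simpa only [SimpleGraph.MovesAlongEdges, not_forall, not_or] using hτ
    refine Finset.prod_eq_zero (Finset.mem_univ v) ?_
    rw [charmatrix_apply_ne _ _ _ (Ne.symm hv), qLap_apply_of_ne G q (Ne.symm hv), if_neg hadj,
      map_zero, neg_zero]

theorem coeff_imman_charmatrix_qLap (χ : Equiv.Perm (Fin n) → ℤ) {r : ℕ} (hr : r ≤ n) :
    (imman (fun τ => ((χ τ : ℤ) : R[X])) (charmatrix (qLap G q))).coeff (n - r) =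
      ∑ τ : Equiv.Perm (Fin n) with G.MovesAlongEdges τ,
        ∑ t ∈ τ.supportᶜ.powerset with #t + #τ.support = r,
          (χ τ : R) * q ^ #τ.support *
            ((-1) ^ #t * ∏ i ∈ t, (1 + q ^ 2 * ((G.degree i : R) - 1))) := by
  rw [imman, finsetSum_coeff, Finset.sum_filter]
  refine Finset.sum_congr rfl fun τ _ => ?_
  rw [prod_charmatrix_qLap, mul_ite, mul_zero]
  split_ifs
  · have hsupp : #τ.support ≤ n := (Finset.card_le_univ _).trans_eq (Fintype.card_fin n)
    rw [← C_eq_intCast, ← mul_assoc, ← C_mul, coeff_C_mul, coeff_prod_X_sub_C, Finset.mul_sum,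
      Finset.card_compl, Fintype.card_fin]
    exact Finset.sum_congr (Finset.filter_congr fun t _ => by omega) fun t _ => rfl
  · exact coeff_zero _

end QLaplacian

theorem chiPart_congr {n : ℕ} (lam : Fin n → ℕ) {σ τ : Equiv.Perm (Fin n)}
    (h : σ.cycleType = τ.cycleType) : chiPart n lam σ = chiPart n lam τ := by
  rw [chiPart, chiPart, h]

theorem coeff_immanantal_qLap_general {n : ℕ} (G : SimpleGraph (Fin n)) [DecidableRel G.Adj]
    (hG : G.IsTree) (lam : Fin n → ℕ)
    (r : ℕ) (hr : r ≤ n)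
    (σ : ℕ → Equiv.Perm (Fin n))
    (hσ : ∀ j ≤ r / 2, (σ j).cycleType = Multiset.replicate j 2) :
    (imman (fun τ => ((chiPart n lam τ : ℤ) : Polynomial (Polynomial ℝ)))
        (Matrix.scalar (Fin n) (X : Polynomial (Polynomial ℝ))
          - (qLap G (X : Polynomial ℝ)).map Polynomial.C)).coeff (n - r)
      = (-1 : Polynomial ℝ) ^ r *
          ∑ j ∈ Finset.range (r / 2 + 1),
            ((chiPart n lam (σ j) : ℤ) : Polynomial ℝ) * mrj G r j := by
  have hac := hG.isAcyclic
  change (imman _ (Matrix.charmatrix (qLap G (X : ℝ[X])))).coeff (n - r) = _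
  rw [coeff_imman_charmatrix_qLap G X (chiPart n lam) hr, Finset.sum_sum_powerset_compl_eq]
  simp only [mrj, mBj, Finset.mul_sum, filter_not_exists_mem_eq_sdiff]
  rw [Finset.sum_comm]
  refine Finset.sum_congr rfl fun B hB => ?_
  have hBr : #B = r := (Finset.mem_filter.1 hB).2
  rw [sum_movesAlongEdges_eq_sum_range hac, hBr]
  refine Finset.sum_congr rfl fun j hj => ?_
  rw [← sum_movesAlongEdges_eq_sum_bMatchings hac B j fun S => (-1) ^ r *
    (((chiPart n lam (σ j) : ℤ) : ℝ[X]) * (X ^ (2 * j) * ∏ i ∈ B \ S,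
      (1 + X ^ 2 * ((G.degree i : ℝ[X]) - 1))))]
  refine Finset.sum_congr rfl fun τ hτ => ?_
  obtain ⟨hmove, hsuppB, hsupp⟩ := (Finset.mem_filter.1 hτ).2
  have hjr : 2 * j ≤ r := by have := Finset.mem_range.1 hj; omega
  have hchi : chiPart n lam τ = chiPart n lam (σ j) := chiPart_congr lam <| by
    rw [Equiv.Perm.cycleType_of_involutive (hac.involutive_of_movesAlongEdges hmove), hsupp,
      Nat.mul_div_cancel_left j two_pos, hσ j (by omega)]
  have hsign : (-1 : ℝ[X]) ^ #(B \ τ.support) = (-1) ^ r := by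
    rw [Finset.card_sdiff_of_subset hsuppB, hBr, hsupp]
    obtain ⟨k, rfl⟩ := Nat.exists_eq_add_of_le hjr
    simp [pow_add, pow_mul]
  rw [hchi, hsupp, hsign]
  ring

/-- For a tree `T` on `[n]`, `λ ⊢ n` and `0 ≤ r ≤ n`, the coefficient
`c_{λ,r}(q) = (-1)^r [x^{n-r}] d_λ(xI - L^q_T)` equals
`∑_{j=0}^{⌊r/2⌋} χ_λ(2^j 1^{n-2j}) m_{r,j}(q)`.  Here `σ j` is any
permutation of cycle type `2^j 1^{n-2j}`, and the immanantal polynomial is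
computed over `(ℝ[q])[x]`. -/
theorem coeff_immanantal_qLap {n : ℕ} (G : SimpleGraph (Fin n)) [DecidableRel G.Adj]
    (hG : G.IsTree) (lam : Fin n → ℕ) (hlam : Antitone lam) (hsum : ∑ i, lam i = n)
    (r : ℕ) (hr : r ≤ n)
    (σ : ℕ → Equiv.Perm (Fin n))
    (hσ : ∀ j ≤ r / 2, (σ j).cycleType = Multiset.replicate j 2) :
    (imman (fun τ => ((chiPart n lam τ : ℤ) : Polynomial (Polynomial ℝ)))
        (Matrix.scalar (Fin n) (X : Polynomial (Polynomial ℝ))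
          - (qLap G (X : Polynomial ℝ)).map Polynomial.C)).coeff (n - r)
      = (-1 : Polynomial ℝ) ^ r *
          ∑ j ∈ Finset.range (r / 2 + 1),
            ((chiPart n lam (σ j) : ℤ) : Polynomial ℝ) * mrj G r j :=
  coeff_immanantal_qLap_general G hG lam r hr σ hσ
end

section
/- Let T be a tree on vertex set [n] and i a vertex. Then Σ_{j ∈ [n]} q^2(deg(j) - 1)·[d(i,j)]_{q^2} = Σ_{j ∈ [n]} [d(i,j)]_{q^2} - (n - 1), where [m]_{q^2} = 1 + q^2 + q^4 + ... + q^{2(m-1)} (with [0]_{q^2} = 0) and d(i,j) is the tree distance. -/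
open Finset Polynomial

/-- The `q²`-integer `[m]_{q²} = 1 + q² + q⁴ + ⋯ + q^{2(m-1)}` in `ℝ[q]`. -/
noncomputable def qSqInt (m : ℕ) : Polynomial ℝ :=
  ∑ s ∈ Finset.range m, X ^ (2 * s)

namespace QSqAux

open SimpleGraph SimpleGraph.Walk

lemma qSqInt_zero : qSqInt 0 = 0 := by simp [qSqInt]

lemma qSqInt_succ (m : ℕ) : qSqInt (m + 1) = 1 + X ^ 2 * qSqInt m := by
  unfold qSqInt
  rw [Finset.sum_range_succ']
  simp only [Nat.mul_zero, pow_zero]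
  rw [add_comm, Finset.mul_sum]
  congr 1
  exact Finset.sum_congr rfl fun s _ => by ring

variable {n : ℕ} {G : SimpleGraph (Fin n)}

lemma adj_dist_le (hG : G.IsTree) {i v w : Fin n} (h : G.Adj v w) :
    G.dist i w ≤ G.dist i v + 1 := by
  have h1 := hG.isConnected.dist_triangle (u := i) (v := v) (w := w)
  have h2 : G.dist v w = 1 := (SimpleGraph.dist_eq_one_iff_adj).2 h
  omega

lemma adj_dist_ne (hG : G.IsTree) {i v w : Fin n} (h : G.Adj v w) :
    G.dist i v ≠ G.dist i w := by
  intro he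
  obtain ⟨p, hp, hl⟩ := hG.isConnected.exists_path_of_dist v i
  have hwp : w ∉ p.support := by
    intro hw
    have t1 : (p.takeUntil w hw).length + (p.dropUntil w hw).length = p.length := by
      rw [← SimpleGraph.Walk.length_append, SimpleGraph.Walk.take_spec]
    have t2 : G.dist w i ≤ (p.dropUntil w hw).length := SimpleGraph.dist_le _
    have t3 : 1 ≤ (p.takeUntil w hw).length := by
      have : G.dist v w ≤ (p.takeUntil w hw).length := SimpleGraph.dist_le _
      have hvw : G.dist v w = 1 := (SimpleGraph.dist_eq_one_iff_adj).2 h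
      omega
    have e1 : G.dist v i = G.dist i v := SimpleGraph.dist_comm ..
    have e2 : G.dist w i = G.dist i w := SimpleGraph.dist_comm ..
    omega
  obtain ⟨r, hr, hrl⟩ := hG.isConnected.exists_path_of_dist w i
  obtain ⟨p0, -, hu⟩ := hG.existsUnique_path w i
  have hq : (SimpleGraph.Walk.cons h.symm p).IsPath := hp.cons hwp
  have heq : SimpleGraph.Walk.cons h.symm p = r := (hu _ hq).trans (hu _ hr).symm
  have := congrArg SimpleGraph.Walk.length heq
  rw [SimpleGraph.Walk.length_cons] at this
  have e1 : G.dist v i = G.dist i v := SimpleGraph.dist_comm ..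
  have e2 : G.dist w i = G.dist i w := SimpleGraph.dist_comm ..
  omega

lemma adj_dist_dichotomy (hG : G.IsTree) {i v w : Fin n} (h : G.Adj v w) :
    G.dist i w = G.dist i v + 1 ∨ G.dist i w + 1 = G.dist i v := by
  have h1 := adj_dist_le hG (i := i) h
  have h2 := adj_dist_le hG (i := i) h.symm
  have h3 := adj_dist_ne hG (i := i) h
  omega

lemma parent_exists (hG : G.IsTree) {i v : Fin n} (hv : v ≠ i) :
    ∃ w, G.Adj v w ∧ G.dist i w + 1 = G.dist i v := by
  obtain ⟨p, hp, hl⟩ := hG.isConnected.exists_path_of_dist v i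
  have hpos : 0 < G.dist v i := hG.isConnected.pos_dist_of_ne hv
  cases p with
  | nil => exact absurd rfl hv
  | @cons _ x _ h q =>
    refine ⟨x, h, ?_⟩
    have h1 : G.dist i x ≤ q.length := by
      rw [SimpleGraph.dist_comm]; exact SimpleGraph.dist_le q
    have h2 : G.dist i v ≤ G.dist i x + 1 := adj_dist_le hG h.symm
    have h3 : q.length + 1 = G.dist v i := by simpa using hl
    have e1 : G.dist v i = G.dist i v := SimpleGraph.dist_comm ..
    omega

lemma parent_unique (hG : G.IsTree) {i v w₁ w₂ : Fin n} (h₁ : G.Adj v w₁) (h₂ : G.Adj v w₂)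
    (e₁ : G.dist i w₁ + 1 = G.dist i v) (e₂ : G.dist i w₂ + 1 = G.dist i v) : w₁ = w₂ := by
  obtain ⟨p₁, hp₁, hl₁⟩ := hG.isConnected.exists_path_of_dist w₁ i
  obtain ⟨p₂, hp₂, hl₂⟩ := hG.isConnected.exists_path_of_dist w₂ i
  have hv₁ : v ∉ p₁.support := by
    intro hv
    have t2 : G.dist v i ≤ (p₁.dropUntil v hv).length := SimpleGraph.dist_le _
    have t3 : (p₁.dropUntil v hv).length ≤ p₁.length :=
      SimpleGraph.Walk.length_dropUntil_le p₁ hv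
    have e3 : G.dist v i = G.dist i v := SimpleGraph.dist_comm ..
    have e4 : G.dist w₁ i = G.dist i w₁ := SimpleGraph.dist_comm ..
    omega
  have hv₂ : v ∉ p₂.support := by
    intro hv
    have t2 : G.dist v i ≤ (p₂.dropUntil v hv).length := SimpleGraph.dist_le _
    have t3 : (p₂.dropUntil v hv).length ≤ p₂.length :=
      SimpleGraph.Walk.length_dropUntil_le p₂ hv
    have e3 : G.dist v i = G.dist i v := SimpleGraph.dist_comm ..
    have e4 : G.dist w₂ i = G.dist i w₂ := SimpleGraph.dist_comm ..
    omega
  obtain ⟨p0, -, hu⟩ := hG.existsUnique_path v i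
  have heq : SimpleGraph.Walk.cons h₁ p₁ = SimpleGraph.Walk.cons h₂ p₂ :=
    (hu _ (hp₁.cons hv₁)).trans (hu _ (hp₂.cons hv₂)).symm
  have hs := congrArg SimpleGraph.Walk.support heq
  rw [SimpleGraph.Walk.support_cons, SimpleGraph.Walk.support_cons,
    p₁.support_eq_cons, p₂.support_eq_cons] at hs
  simp only [List.cons.injEq, true_and] at hs
  exact hs.1

end QSqAux

open QSqAux SimpleGraph in
/-- For a tree `T` on `[n]` and a vertex `i`,
`∑_j q²(deg j - 1)[d(i,j)]_{q²} = ∑_j [d(i,j)]_{q²} - (n-1)` in `ℝ[q]`. -/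
theorem qSq_moment_identity {n : ℕ} (G : SimpleGraph (Fin n)) [DecidableRel G.Adj]
    (hG : G.IsTree) (i : Fin n) :
    ∑ j : Fin n, X ^ 2 * ((G.degree j : Polynomial ℝ) - 1) * qSqInt (G.dist i j)
      = (∑ j : Fin n, qSqInt (G.dist i j)) - ((n : Polynomial ℝ) - 1) := by
  classical
  set d : Fin n → ℕ := fun j => G.dist i j with hd
  set f : Fin n → Polynomial ℝ := fun j => qSqInt (d j) with hf
  have hfi : f i = 0 := by
    simp only [hf, hd]
    rw [SimpleGraph.dist_self, qSqInt_zero]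
  -- parent and child finsets
  set P : Fin n → Finset (Fin n) :=
    fun v => univ.filter (fun w => G.Adj v w ∧ d w + 1 = d v) with hP
  set C : Fin n → Finset (Fin n) :=
    fun v => univ.filter (fun w => G.Adj v w ∧ d w = d v + 1) with hC
  have hPcard : ∀ v, (P v).card = if v = i then 0 else 1 := by
    intro v
    by_cases hv : v = i
    · subst hv
      rw [if_pos rfl, Finset.card_eq_zero, Finset.filter_eq_empty_iff]
      intro w _
      simp only [hd, SimpleGraph.dist_self]
      rintro ⟨-, hw⟩
      omega
    · rw [if_neg hv, Finset.card_eq_one]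
      obtain ⟨w₀, hw₀a, hw₀e⟩ := parent_exists hG hv
      refine ⟨w₀, ?_⟩
      ext w
      simp only [hP, Finset.mem_filter, Finset.mem_univ, true_and, Finset.mem_singleton]
      constructor
      · rintro ⟨ha, he⟩
        exact parent_unique hG ha hw₀a he hw₀e
      · rintro rfl
        exact ⟨hw₀a, hw₀e⟩
  have hdeg : ∀ v, G.degree v = (C v).card + (P v).card := by
    intro v
    have hsplit : univ.filter (fun w => G.Adj v w) = C v ∪ P v := by
      ext w
      simp only [hC, hP, Finset.mem_union, Finset.mem_filter, Finset.mem_univ, true_and]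
      constructor
      · intro ha
        rcases adj_dist_dichotomy hG (i := i) ha with h | h
        · exact Or.inl ⟨ha, h⟩
        · exact Or.inr ⟨ha, h⟩
      · rintro (⟨ha, -⟩ | ⟨ha, -⟩) <;> exact ha
    have hdisj : Disjoint (C v) (P v) := by
      rw [Finset.disjoint_left]
      intro w hw₁ hw₂
      simp only [hC, Finset.mem_filter] at hw₁
      simp only [hP, Finset.mem_filter] at hw₂
      omega
    rw [SimpleGraph.degree, SimpleGraph.neighborFinset_eq_filter, hsplit,
      Finset.card_union_of_disjoint hdisj]
  -- child recursion
  have hchild : ∀ v w, w ∈ C v → f w - 1 = X ^ 2 * f v := by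
    intro v w hw
    simp only [hC, Finset.mem_filter] at hw
    simp only [hf]
    rw [hw.2.2, qSqInt_succ]
    ring
  -- per-vertex identity
  have key : ∀ v, X ^ 2 * ((G.degree v : Polynomial ℝ) - 1) * f v
      = ∑ w ∈ C v, (f w - 1) := by
    intro v
    have h1 : ((G.degree v : Polynomial ℝ)) = ((C v).card : Polynomial ℝ)
        + ((P v).card : Polynomial ℝ) := by
      rw [hdeg v]; push_cast; ring
    have h2 : ((P v).card : Polynomial ℝ) * (X ^ 2 * f v) = X ^ 2 * f v := by
      rw [hPcard v]
      by_cases hv : v = i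
      · subst hv; simp [hfi]
      · simp [hv]
    have h3 : ((C v).card : Polynomial ℝ) * (X ^ 2 * f v) = ∑ w ∈ C v, (f w - 1) := by
      rw [Finset.sum_congr rfl (fun w hw => hchild v w hw), Finset.sum_const, nsmul_eq_mul]
    calc X ^ 2 * ((G.degree v : Polynomial ℝ) - 1) * f v
        = ((C v).card : Polynomial ℝ) * (X ^ 2 * f v)
          + (((P v).card : Polynomial ℝ) * (X ^ 2 * f v) - X ^ 2 * f v) := by
          rw [h1]; ring
      _ = ∑ w ∈ C v, (f w - 1) := by rw [h2, h3]; ring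
  -- sum over all vertices and swap
  have hswap : ∑ v : Fin n, ∑ w ∈ C v, (f w - 1)
      = ∑ w : Fin n, ((if w = i then 0 else 1 : ℕ) : Polynomial ℝ) * (f w - 1) := by
    rw [Finset.sum_comm' (s := univ) (t := C) (t' := univ)
      (s' := fun w => univ.filter (fun v => w ∈ C v)) ?hcomm]
    · refine Finset.sum_congr rfl fun w _ => ?_
      rw [Finset.sum_const, nsmul_eq_mul]
      congr 2
      have : univ.filter (fun v => w ∈ C v)
          = univ.filter (fun v => G.Adj w v ∧ d v + 1 = d w) := by
        ext v
        simp only [hC, Finset.mem_filter, Finset.mem_univ, true_and]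
        constructor
        · rintro ⟨ha, he⟩; exact ⟨ha.symm, he.symm⟩
        · rintro ⟨ha, he⟩; exact ⟨ha.symm, he.symm⟩
      rw [this]
      exact hPcard w
    · intro x y
      simp only [Finset.mem_filter, Finset.mem_univ, true_and, and_comm]
  have huniv : (univ : Finset (Fin n)).card = n := by simp
  calc ∑ j : Fin n, X ^ 2 * ((G.degree j : Polynomial ℝ) - 1) * qSqInt (G.dist i j)
      = ∑ v : Fin n, ∑ w ∈ C v, (f w - 1) := Finset.sum_congr rfl fun v _ => key v
    _ = ∑ w : Fin n, ((if w = i then 0 else 1 : ℕ) : Polynomial ℝ) * (f w - 1) := hswap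
    _ = ∑ w : Fin n, ((f w - 1) - if w = i then f w - 1 else 0) := by
        refine Finset.sum_congr rfl fun w _ => ?_
        by_cases hw : w = i <;> simp [hw]
    _ = (∑ w : Fin n, (f w - 1)) - (f i - 1) := by
        rw [Finset.sum_sub_distrib, Finset.sum_ite_eq' univ i (fun w => f w - 1)]
        simp
    _ = (∑ j : Fin n, qSqInt (G.dist i j)) - ((n : Polynomial ℝ) - 1) := by
        rw [Finset.sum_sub_distrib, Finset.sum_const, hfi, huniv]
        simp only [hf, hd]
        ring
end

section
/- Let T be a tree on vertex set [n] and i ∈ [n]. Define the q^2-moment Moment(i) = Σ_{j ∈ [n]} (1 + q^2(deg(j) - 1)) · [d(i,j)]_{q^2}. Then Moment(i) = (n-1) + 2q^2 · Σ_{j ∈ [n]} (deg(j) - 1) · [d(i,j)]_{q^2}. -/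
open Finset Polynomial

/-- The `q²`-analogue of the moment of vertex `i` in `T`:
`Moment(i) = ∑_j (1 + q²(deg j - 1)) [d(i,j)]_{q²}`. -/
noncomputable def qMoment {n : ℕ} (G : SimpleGraph (Fin n)) [DecidableRel G.Adj]
    (i : Fin n) : Polynomial ℝ :=
  ∑ j : Fin n, (1 + X ^ 2 * ((G.degree j : Polynomial ℝ) - 1)) * qSqInt (G.dist i j)


/-!
Root the tree at `i`. Every vertex `j ≠ i` has exactly one neighbour one step closer to `i`
(its parent), so `[d(i,j)]_{q²} = 1 + q² [d(i, parent j)]_{q²}`. Summing over `j ≠ i` gives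
`∑_j [d(i,j)] = (n - 1) + q² ∑_k (#children of k) [d(i,k)]`, and `k` has `deg k - 1` children
unless `k = i`, where `[d(i,i)] = 0`. Hence
`∑_j [d(i,j)] = (n-1) + q² ∑_j (deg j - 1)[d(i,j)]`, and the theorem follows by expanding
`Moment(i)`.
-/

namespace SimpleGraph

variable {V : Type*} {G : SimpleGraph V} {i j k : V}

lemma exists_adj_dist_add_one_eq (h : G.dist i j ≠ 0) :
    ∃ k, G.Adj j k ∧ G.dist i k + 1 = G.dist i j := by
  obtain ⟨p, hp⟩ := exists_walk_of_dist_ne_zero h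
  have hnil : ¬ p.Nil := by rw [Walk.not_nil_iff_lt_length]; omega
  refine ⟨p.penultimate, (p.adj_penultimate hnil).symm, ?_⟩
  have hle : G.dist i p.penultimate + 1 ≤ G.dist i j := by
    have := dist_le p.dropLast
    rw [Walk.length_dropLast] at this
    omega
  rcases (p.adj_penultimate hnil).diff_dist_adj (u := i) with h' | h' | h' <;> omega

lemma IsAcyclic.eq_of_adj_of_dist_add_one_eq {k' : V} (hG : G.IsAcyclic) (hk : G.Adj j k)
    (hk' : G.Adj j k') (hd : G.dist i k + 1 = G.dist i j) (hd' : G.dist i k' + 1 = G.dist i j) :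
    k = k' := by
  have hij : G.Reachable i j := Reachable.of_dist_ne_zero (by omega)
  obtain ⟨q, hq⟩ := (hij.trans hk.reachable).exists_walk_length_eq_dist
  obtain ⟨q', hq'⟩ := (hij.trans hk'.reachable).exists_walk_length_eq_dist
  have hpath : (q.concat hk.symm).IsPath :=
    Walk.isPath_of_length_eq_dist _ (by rw [Walk.length_concat, hq, hd])
  have hpath' : (q'.concat hk'.symm).IsPath :=
    Walk.isPath_of_length_eq_dist _ (by rw [Walk.length_concat, hq', hd'])
  have := (hG.subsingleton_path i j).elim ⟨_, hpath⟩ ⟨_, hpath'⟩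
  exact (Walk.concat_inj (Subtype.mk.inj this)).1

variable [Fintype V] (G) [DecidableRel G.Adj]

noncomputable def parentFinset (i j : V) : Finset V :=
  {k ∈ G.neighborFinset j | G.dist i k + 1 = G.dist i j}

noncomputable def childFinset (i k : V) : Finset V :=
  {j ∈ G.neighborFinset k | G.dist i k + 1 = G.dist i j}

variable {G}

lemma mem_parentFinset :
    k ∈ G.parentFinset i j ↔ G.Adj j k ∧ G.dist i k + 1 = G.dist i j := by
  simp [parentFinset]

lemma mem_childFinset_iff_mem_parentFinset :
    j ∈ G.childFinset i k ↔ k ∈ G.parentFinset i j := by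
  simp [childFinset, parentFinset, adj_comm]

lemma sum_sum_parentFinset {M : Type*} [AddCommMonoid M] (i : V) (g : V → M) :
    ∑ j, ∑ k ∈ G.parentFinset i j, g k = ∑ k, #(G.childFinset i k) • g k := by
  rw [Finset.sum_comm' (t' := univ) (s' := G.childFinset i)]
  · simp
  · simp [mem_childFinset_iff_mem_parentFinset]

@[simp]
lemma parentFinset_self : G.parentFinset i i = ∅ := by
  simp [parentFinset]

lemma IsTree.card_parentFinset (hG : G.IsTree) (hji : j ≠ i) : #(G.parentFinset i j) = 1 := by
  have hd : G.dist i j ≠ 0 := (hG.connected.pos_dist_of_ne hji.symm).ne'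
  obtain ⟨k, hk⟩ := exists_adj_dist_add_one_eq hd
  refine card_eq_one.2
    ⟨k, eq_singleton_iff_unique_mem.2 ⟨mem_parentFinset.2 hk, fun k' hk' => ?_⟩⟩
  rw [mem_parentFinset] at hk'
  exact hG.isAcyclic.eq_of_adj_of_dist_add_one_eq hk'.1 hk.1 hk'.2 hk.2

lemma IsAcyclic.card_parentFinset_add_card_childFinset (hG : G.IsAcyclic) (h : G.Reachable i k) :
    #(G.parentFinset i k) + #(G.childFinset i k) = G.degree k := by
  rw [← card_neighborFinset_eq_degree,
    ← card_filter_add_card_filter_not (s := G.neighborFinset k) (G.dist i · + 1 = G.dist i k)]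
  congr 2
  refine filter_congr fun j hj => ?_
  rcases hG.dist_eq_dist_add_one_of_adj_of_reachable i ((mem_neighborFinset _ _ _).1 hj) h
    with h' | h' <;> omega

lemma IsTree.sum_card_parentFinset (hG : G.IsTree) (i : V) :
    ∑ j, #(G.parentFinset i j) = Fintype.card V - 1 := by
  classical
  rw [← add_sum_erase _ _ (mem_univ i), parentFinset_self, card_empty, zero_add,
    sum_congr rfl fun j hj => hG.card_parentFinset (ne_of_mem_erase hj), sum_const,
    card_erase_of_mem (mem_univ i), card_univ, smul_eq_mul, mul_one]

theorem IsTree.sum_comp_dist {R : Type*} [CommRing R] (hG : G.IsTree) (i : V) {f : ℕ → R}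
    {c : R} (hf₀ : f 0 = 0) (hf : ∀ m, f (m + 1) = 1 + c * f m) :
    ∑ j, f (G.dist i j)
      = ((Fintype.card V : R) - 1) + c * ∑ j, ((G.degree j : R) - 1) * f (G.dist i j) := by
  have hparent : ∀ j, (#(G.parentFinset i j) : R) * f (G.dist i j) = f (G.dist i j) := by
    intro j
    by_cases hji : j = i
    · simp [hji, hf₀]
    · simp [hG.card_parentFinset hji]
  have hstep : ∀ j, f (G.dist i j) = ∑ k ∈ G.parentFinset i j, (1 + c * f (G.dist i k)) := by
    intro j
    rw [sum_congr rfl fun k hk => by rw [← hf, (mem_parentFinset.1 hk).2], sum_const,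
      nsmul_eq_mul, hparent]
  have hchild : ∀ k, #(G.childFinset i k) • f (G.dist i k)
      = ((G.degree k : R) - 1) * f (G.dist i k) := by
    intro k
    rw [nsmul_eq_mul, ← hG.isAcyclic.card_parentFinset_add_card_childFinset (hG.connected i k)]
    push_cast
    linear_combination -hparent k
  have : Nonempty V := hG.connected.nonempty
  calc ∑ j, f (G.dist i j) = ∑ j, ∑ k ∈ G.parentFinset i j, (1 + c * f (G.dist i k)) :=
        sum_congr rfl fun j _ => hstep j
    _ = ((∑ j, #(G.parentFinset i j) : ℕ) : R)
          + c * ∑ j, ∑ k ∈ G.parentFinset i j, f (G.dist i k) := by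
        simp [sum_add_distrib, mul_sum]
    _ = _ := by
        rw [sum_sum_parentFinset, hG.sum_card_parentFinset, Nat.cast_sub Fintype.card_pos,
          sum_congr rfl fun k _ => hchild k, Nat.cast_one]

end SimpleGraph

lemma qSqInt_zero : qSqInt 0 = 0 := by
  simp [qSqInt]

lemma qSqInt_succ (m : ℕ) : qSqInt (m + 1) = 1 + X ^ 2 * qSqInt m := by
  simp [qSqInt, sum_range_succ', mul_sum, mul_add, pow_add, add_comm]

/-- For a tree `T` on `[n]` and a vertex `i`,
`Moment(i) = (n-1) + 2q² ∑_j (deg j - 1)[d(i,j)]_{q²}`. -/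
theorem qMoment_alt {n : ℕ} (G : SimpleGraph (Fin n)) [DecidableRel G.Adj]
    (hG : G.IsTree) (i : Fin n) :
    qMoment G i
      = ((n : Polynomial ℝ) - 1)
        + 2 * X ^ 2 * ∑ j : Fin n, ((G.degree j : Polynomial ℝ) - 1) * qSqInt (G.dist i j) := by
  have hsum := hG.sum_comp_dist i qSqInt_zero qSqInt_succ
  rw [Fintype.card_fin] at hsum
  simp only [qMoment, add_mul, one_mul, sum_add_distrib, mul_assoc, ← mul_sum, hsum]
  ring
end

section
/- Let T be a tree on n vertices and let L^q_T be its q-Laplacian over R with q a real number satisfying |q| > 1. Then L^q_T (which is symmetric) has exactly n-1 positive eigenvalues, exactly 1 negative eigenvalue, and 0 as eigenvalue with multiplicity 0 (i.e., it is nonsingular with signature (n-1, 1, 0)). -/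
/-!
Root the tree at `r` and let `p v` be the neighbour of `v ≠ r` towards `r`. Every edge is `{v, p v}`
for exactly one `v ≠ r`, and regrouping the quadratic form edge by edge gives
`x ⬝ᵥ L x = ∑_{v ≠ r} (q x(p v) - x v)² + (1 - q²) x(r)²`.
On the hyperplane `x r = 0` this is positive definite: if all squares vanish, `x v = q x(p v)`
propagates `x r = 0` to every vertex. The vector `x v = q ^ dist r v` kills every square, so the
form is `1 - q² < 0` on its line. A positive definite subspace of dimension `n - 1` and a negative
definite line force, by comparing dimensions with eigenvector spans, `n - 1` positive eigenvalues,
one negative eigenvalue and none equal to zero.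
-/

open Finset

open Matrix Module

section Inertia

theorem card_filter_pos_add_card_filter_nonpos {ι : Type*} [Fintype ι] (μ : ι → ℝ) :
    #{i | 0 < μ i} + #{i | μ i ≤ 0} = Fintype.card ι := by
  simpa only [not_lt, card_univ] using card_filter_add_card_filter_not (s := univ) fun i => 0 < μ i

variable {E ι : Type*} [NormedAddCommGroup E] [InnerProductSpace ℝ E] [Fintype ι]
  {T : E →ₗ[ℝ] E} {e : OrthonormalBasis ι ℝ E} {μ : ι → ℝ}

theorem OrthonormalBasis.inner_map_self_eq_sum (he : ∀ i, T (e i) = μ i • e i) (x : E) :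
    inner ℝ (T x) x = ∑ i, μ i * inner ℝ (e i) x ^ 2 := by
  nth_rw 1 [← e.sum_repr' x]
  simp only [map_sum, map_smul, he, smul_smul, sum_inner, real_inner_smul_left]
  refine sum_congr rfl fun i _ => ?_
  ring

theorem OrthonormalBasis.card_nonpos_add_finrank_le (he : ∀ i, T (e i) = μ i • e i)
    (W : Submodule ℝ E) (hW : ∀ x ∈ W, x ≠ 0 → 0 < inner ℝ (T x) x) :
    #{i | μ i ≤ 0} + finrank ℝ W ≤ Fintype.card ι := by
  have : FiniteDimensional ℝ E := .of_basis e.toBasis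
  -- the form is `≤ 0` on the common kernel of the `⟪e i, ·⟫` with `0 < μ i`
  let f : E →ₗ[ℝ] ({i // 0 < μ i} → ℝ) := LinearMap.pi fun i => innerₗ E (e i)
  have hdisj : Disjoint (LinearMap.ker f) W := by
    refine Submodule.disjoint_def.2 fun x hxf hxW => by_contra fun hx => (hW x hxW hx).not_ge ?_
    rw [e.inner_map_self_eq_sum he]
    refine sum_nonpos fun i _ => ?_
    rcases le_or_gt (μ i) 0 with hi | hi
    · exact mul_nonpos_of_nonpos_of_nonneg hi (sq_nonneg _)
    · have : inner ℝ (e i) x = 0 := congrFun (LinearMap.mem_ker.1 hxf) ⟨i, hi⟩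
      simp [this]
  have hrange : finrank ℝ (LinearMap.range f) ≤ #{i | 0 < μ i} := by
    rw [← Fintype.card_subtype, ← finrank_fintype_fun_eq_card ℝ]
    exact Submodule.finrank_le _
  have hcard := card_filter_pos_add_card_filter_nonpos μ
  have := Submodule.finrank_add_finrank_le_of_disjoint hdisj
  have := f.finrank_range_add_finrank_ker
  rw [finrank_eq_card_basis e.toBasis] at *
  omega

theorem OrthonormalBasis.signature_eq_of_posDef_of_negDef (he : ∀ i, T (e i) = μ i • e i)
    {Wpos Wneg : Submodule ℝ E} (hpos : ∀ x ∈ Wpos, x ≠ 0 → 0 < inner ℝ (T x) x)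
    (hneg : ∀ x ∈ Wneg, x ≠ 0 → inner ℝ (T x) x < 0)
    (hdim : finrank ℝ Wpos + finrank ℝ Wneg = Fintype.card ι) :
    #{i | 0 < μ i} = finrank ℝ Wpos ∧ #{i | μ i < 0} = finrank ℝ Wneg ∧ #{i | μ i = 0} = 0 := by
  have hle_pos := e.card_nonpos_add_finrank_le he Wpos hpos
  have hle_neg := e.card_nonpos_add_finrank_le (T := -T) (μ := -μ) (fun i => by simp [he]) Wneg
    fun x hx hx0 => by simpa using hneg x hx hx0
  have hcard := card_filter_pos_add_card_filter_nonpos μ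
  have hnonpos : #{i | μ i ≤ 0} = #{i | μ i < 0} + #{i | μ i = 0} := by
    simp only [card_filter, ← sum_add_distrib]
    refine sum_congr rfl fun i _ => ?_
    split_ifs <;> grind
  have hnonneg : #{i | 0 ≤ μ i} = #{i | 0 < μ i} + #{i | μ i = 0} := by
    simp only [card_filter, ← sum_add_distrib]
    refine sum_congr rfl fun i _ => ?_
    split_ifs <;> grind
  simp only [Pi.neg_apply, neg_nonpos] at hle_neg
  omega

end Inertia

theorem Matrix.IsHermitian.signature_eq_of_posDef_of_negDef {ι : Type*} [Fintype ι] [DecidableEq ι]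
    {A : Matrix ι ι ℝ} (hA : A.IsHermitian) {Wpos Wneg : Submodule ℝ (EuclideanSpace ℝ ι)}
    (hpos : ∀ x ∈ Wpos, x ≠ 0 → 0 < x.ofLp ⬝ᵥ A *ᵥ x.ofLp)
    (hneg : ∀ x ∈ Wneg, x ≠ 0 → x.ofLp ⬝ᵥ A *ᵥ x.ofLp < 0)
    (hdim : finrank ℝ Wpos + finrank ℝ Wneg = Fintype.card ι) :
    #{i | 0 < hA.eigenvalues i} = finrank ℝ Wpos ∧
      #{i | hA.eigenvalues i < 0} = finrank ℝ Wneg ∧ #{i | hA.eigenvalues i = 0} = 0 := by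
  have hinner (x : EuclideanSpace ℝ ι) :
      inner ℝ (toEuclideanLin A x) x = x.ofLp ⬝ᵥ A *ᵥ x.ofLp := by
    rw [EuclideanSpace.inner_eq_star_dotProduct, star_trivial]
    rfl
  exact hA.eigenvectorBasis.signature_eq_of_posDef_of_negDef (T := toEuclideanLin A)
    (fun i => WithLp.ofLp_injective 2 (hA.mulVec_eigenvectorBasis i))
    (fun x hx hx0 => hinner x ▸ hpos x hx hx0) (fun x hx hx0 => hinner x ▸ hneg x hx hx0) hdim

namespace SimpleGraph

variable {V : Type*} {G : SimpleGraph V} {r : V} {p : V → V}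

structure IsParentMap (G : SimpleGraph V) (r : V) (p : V → V) : Prop where
  dist_parent : ∀ v, v ≠ r → G.dist r (p v) + 1 = G.dist r v
  adj_iff : ∀ u w, G.Adj u w ↔ (u ≠ r ∧ p u = w) ∨ (w ≠ r ∧ p w = u)

theorem IsTree.exists_isParentMap (hG : G.IsTree) (r : V) : ∃ p, G.IsParentMap r p := by
  choose W hW using fun v => hG.connected.exists_walk_length_eq_dist v r
  have hnil (v : V) (hv : v ≠ r) : ¬(W v).Nil := fun h => hv h.eq
  have hdist (v : V) (hv : v ≠ r) : G.dist r (W v).snd + 1 = G.dist r v := by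
    have hle : G.dist r (W v).snd + 1 ≤ G.dist r v := by
      rw [dist_comm, dist_comm (u := r), ← hW v, ← Walk.length_tail_add_one (hnil v hv)]
      exact Nat.add_le_add_right (dist_le _) 1
    rcases hG.dist_eq_dist_add_one_of_adj r ((W v).adj_snd (hnil v hv)) with h | h <;> omega
  have hsnd {u w : V} (h : G.Adj u w) (huw : G.dist r u = G.dist r w + 1) : (W u).snd = w := by
    have hlen : (Walk.cons h (W w)).length = G.dist u r := by
      rw [Walk.length_cons, hW w, dist_comm (u := u), huw, dist_comm]
    have := (hG.existsUnique_path u r).unique ((W u).isPath_of_length_eq_dist (hW u))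
      ((Walk.cons h (W w)).isPath_of_length_eq_dist hlen)
    rw [this, Walk.snd_cons]
  have hne {u w : V} (huw : G.dist r u = G.dist r w + 1) : u ≠ r := by
    rintro rfl
    simp at huw
  refine ⟨fun v => (W v).snd, hdist, fun u w => ⟨fun h => ?_, ?_⟩⟩
  · rcases hG.dist_eq_dist_add_one_of_adj r h with h' | h'
    · exact .inl ⟨hne h', hsnd h h'⟩
    · exact .inr ⟨hne h', hsnd h.symm h'⟩
  · rintro (⟨hu, rfl⟩ | ⟨hw, rfl⟩)
    · exact (W u).adj_snd (hnil u hu)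
    · exact ((W w).adj_snd (hnil w hw)).symm

namespace IsParentMap

theorem induction (hp : G.IsParentMap r p) {P : V → Prop} (root : P r)
    (step : ∀ v, v ≠ r → P (p v) → P v) (v : V) : P v := by
  induction hv : G.dist r v using Nat.strong_induction_on generalizing v with
  | _ k ih =>
    by_cases hvr : v = r
    · exact hvr ▸ root
    · exact step v hvr (ih _ (by rw [← hv, ← hp.dist_parent v hvr]; omega) _ rfl)

theorem not_parent_parent (hp : G.IsParentMap r p) {v : V} (hv : v ≠ r) (hpv : p v ≠ r) :
    p (p v) ≠ v := by
  intro h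
  have h1 := hp.dist_parent v hv
  have h2 := hp.dist_parent (p v) hpv
  rw [h] at h2
  omega

theorem sum_sum_neighborFinset [Fintype V] [DecidableEq V] [DecidableRel G.Adj]
    {M : Type*} [AddCommMonoid M] (hp : G.IsParentMap r p) (g : V → V → M) :
    ∑ u, ∑ w ∈ G.neighborFinset u, g u w = ∑ v ∈ univ.erase r, (g v (p v) + g (p v) v) := by
  have hsplit (u w : V) : (if G.Adj u w then g u w else 0) =
      (if u ≠ r ∧ p u = w then g u w else 0) + (if w ≠ r ∧ p w = u then g u w else 0) := by
    by_cases h₁ : u ≠ r ∧ p u = w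
    · have h₂ : ¬(w ≠ r ∧ p w = u) := by
        obtain ⟨hu, rfl⟩ := h₁
        exact fun ⟨hw, hpw⟩ => hp.not_parent_parent hu hw hpw
      simp [h₁, h₂, (hp.adj_iff u w).2 (.inl h₁)]
    · simp [h₁, hp.adj_iff u w]
  simp_rw [neighborFinset_eq_filter, sum_filter, hsplit, sum_add_distrib, ite_and]
  rw [sum_comm (s := univ) (t := univ)
    (f := fun u w => if w ≠ r then if p w = u then g u w else 0 else 0)]
  simp only [sum_ite_irrel, sum_ite_eq, mem_univ, if_true, sum_const_zero]
  rw [← sum_filter, ← sum_filter, filter_ne']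

end IsParentMap

end SimpleGraph

section QLaplacian

variable {n : ℕ} {G : SimpleGraph (Fin n)} [DecidableRel G.Adj] {R : Type*} [CommRing R]

theorem qLap_mulVec_apply (q : R) (x : Fin n → R) (u : Fin n) :
    (qLap G q *ᵥ x) u =
      (1 + q ^ 2 * ((G.degree u : R) - 1)) * x u - q * ∑ w ∈ G.neighborFinset u, x w := by
  have hentry (w : Fin n) : qLap G q u w =
      (if u = w then 1 + q ^ 2 * ((G.degree u : R) - 1) else 0) +
        (if G.Adj u w then -q else 0) := by
    by_cases huw : u = w
    · subst huw; simp [qLap]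
    · simp [qLap, huw]
  simp only [mulVec, dotProduct, hentry, add_mul, ite_mul, zero_mul, sum_add_distrib,
    sum_ite_eq, mem_univ, if_true, ← sum_filter, ← SimpleGraph.neighborFinset_eq_filter, neg_mul,
    sum_neg_distrib, mul_sum, sub_eq_add_neg]

theorem qLap_dotProduct_mulVec (q : R) (x : Fin n → R) :
    x ⬝ᵥ (qLap G q *ᵥ x) = (1 - q ^ 2) * ∑ u, x u ^ 2 +
      ∑ u, ∑ w ∈ G.neighborFinset u, (q ^ 2 * x u ^ 2 - q * x u * x w) := by
  rw [dotProduct, mul_sum, ← sum_add_distrib]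
  refine sum_congr rfl fun u _ => ?_
  rw [qLap_mulVec_apply, sum_sub_distrib, sum_const, SimpleGraph.card_neighborFinset_eq_degree,
    nsmul_eq_mul, ← mul_sum]
  ring

end QLaplacian

namespace SimpleGraph.IsParentMap

variable {n : ℕ} {G : SimpleGraph (Fin n)} [DecidableRel G.Adj] {r : Fin n} {p : Fin n → Fin n}
  {R : Type*} [CommRing R]

theorem qLap_dotProduct_mulVec (hp : G.IsParentMap r p) (q : R) (x : Fin n → R) :
    x ⬝ᵥ (qLap G q *ᵥ x) = ∑ v ∈ univ.erase r, (q * x (p v) - x v) ^ 2 + (1 - q ^ 2) * x r ^ 2 := by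
  rw [_root_.qLap_dotProduct_mulVec, hp.sum_sum_neighborFinset, ← add_sum_erase univ _ (mem_univ r),
    mul_add, mul_sum, add_assoc, ← sum_add_distrib, add_comm]
  congr 1
  refine sum_congr rfl fun v _ => ?_
  ring

theorem qLap_dotProduct_mulVec_pos (hp : G.IsParentMap r p) (q : ℝ) {x : Fin n → ℝ}
    (hxr : x r = 0) (hx : x ≠ 0) : 0 < x ⬝ᵥ (qLap G q *ᵥ x) := by
  rw [hp.qLap_dotProduct_mulVec, hxr, zero_pow two_ne_zero, mul_zero, add_zero]
  refine (sum_nonneg fun v _ => sq_nonneg _).lt_of_ne fun h => hx ?_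
  have hstep (v : Fin n) (hv : v ≠ r) : q * x (p v) - x v = 0 :=
    pow_eq_zero_iff two_ne_zero |>.1 <|
      (sum_eq_zero_iff_of_nonneg fun v _ => sq_nonneg _).1 h.symm v (mem_erase.2 ⟨hv, mem_univ v⟩)
  funext v
  refine hp.induction (P := fun v => x v = 0) hxr (fun v hv hpv => ?_) v
  simpa [hpv] using hstep v hv

theorem qLap_dotProduct_mulVec_pow_dist (hp : G.IsParentMap r p) (q : R) :
    (fun v => q ^ G.dist r v) ⬝ᵥ (qLap G q *ᵥ fun v => q ^ G.dist r v) = 1 - q ^ 2 := by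
  rw [hp.qLap_dotProduct_mulVec, sum_eq_zero fun v hv => ?_, dist_self]
  · ring
  · rw [← hp.dist_parent v (ne_of_mem_erase hv), pow_succ]
    ring

end SimpleGraph.IsParentMap

theorem qLap_signature_general {n : ℕ} (G : SimpleGraph (Fin n))
    [DecidableRel G.Adj] (hG : G.IsTree) (q : ℝ) (hq : 1 < |q|)
    (hH : (qLap G q).IsHermitian) :
    (Finset.univ.filter fun i => 0 < hH.eigenvalues i).card = n - 1 ∧
    (Finset.univ.filter fun i => hH.eigenvalues i < 0).card = 1 ∧
    (Finset.univ.filter fun i => hH.eigenvalues i = 0).card = 0 := by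
  obtain ⟨r⟩ := hG.connected.nonempty
  obtain ⟨p, hp⟩ := hG.exists_isParentMap r
  let er : EuclideanSpace ℝ (Fin n) := EuclideanSpace.single r 1
  let z : EuclideanSpace ℝ (Fin n) := WithLp.toLp 2 fun v => q ^ G.dist r v
  have hz : z ≠ 0 := fun h => by
    simpa [z] using congrArg (fun x : EuclideanSpace ℝ (Fin n) => x r) h
  have hpos (x) (hx : x ∈ (ℝ ∙ er)ᗮ) (hx0 : x ≠ 0) : 0 < x.ofLp ⬝ᵥ qLap G q *ᵥ x.ofLp := by
    refine hp.qLap_dotProduct_mulVec_pos q ?_ (by simpa using hx0)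
    have := Submodule.mem_orthogonal_singleton_iff_inner_right.1 hx
    rwa [EuclideanSpace.inner_single_left, map_one, one_mul] at this
  have hneg (x) (hx : x ∈ ℝ ∙ z) (hx0 : x ≠ 0) : x.ofLp ⬝ᵥ qLap G q *ᵥ x.ofLp < 0 := by
    obtain ⟨a, rfl⟩ := Submodule.mem_span_singleton.1 hx
    have ha : a ≠ 0 := by rintro rfl; simp at hx0
    have hq2 : 1 < q ^ 2 := (one_lt_sq_iff_one_lt_abs q).2 hq
    rw [WithLp.ofLp_smul, mulVec_smul, smul_dotProduct, dotProduct_smul,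
      hp.qLap_dotProduct_mulVec_pow_dist, smul_eq_mul, smul_eq_mul, ← mul_assoc]
    exact mul_neg_of_pos_of_neg (mul_self_pos.2 ha) (by linarith)
  have hcompl := Submodule.finrank_add_finrank_orthogonal (ℝ ∙ er)
  rw [finrank_span_singleton (by simp [er]), finrank_euclideanSpace_fin] at hcompl
  obtain ⟨h₁, h₂, h₃⟩ := hH.signature_eq_of_posDef_of_negDef hpos hneg
    (by rw [finrank_span_singleton hz, Fintype.card_fin]; omega)
  exact ⟨by omega, h₂.trans (finrank_span_singleton hz), h₃⟩

/-- For a tree on `n ≥ 2` vertices and a real `q` with `|q| > 1`, the (symmetric)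
`q`-Laplacian has signature `(n-1, 1, 0)`: exactly `n-1` positive eigenvalues,
exactly `1` negative eigenvalue, and `0` is not an eigenvalue. -/
theorem qLap_signature {n : ℕ} (hn : 2 ≤ n) (G : SimpleGraph (Fin n))
    [DecidableRel G.Adj] (hG : G.IsTree) (q : ℝ) (hq : 1 < |q|)
    (hH : (qLap G q).IsHermitian) :
    (Finset.univ.filter fun i => 0 < hH.eigenvalues i).card = n - 1 ∧
    (Finset.univ.filter fun i => hH.eigenvalues i < 0).card = 1 ∧
    (Finset.univ.filter fun i => hH.eigenvalues i = 0).card = 0 :=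
  qLap_signature_general G hG q hq hH
end

section
/- Let T be a tree on vertex set [n], B ⊆ [n] a proper subset with |B| = r < n, and q ∈ R. Then det(L^q_T[B|B]) ≥ 0, where L^q_T[B|B] is the principal submatrix of the q-Laplacian indexed by B. In particular every proper principal minor of L^q_T is nonnegative for all real q. -/
/-!
Root the tree at a vertex `r ∉ B` and let `P` be the matrix of the parent map,
`eᵥ ↦ e_{parent v}`. Every vertex other than `r` has exactly `deg v - 1` children, and
`P + Pᵀ` is the adjacency matrix away from the root, so `N = q P - 1` satisfies
`(N Nᵀ) i j = L^q_T i j` whenever `i ≠ r`.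
Hence `L^q_T[B|B]` is the Gram matrix of the rows of `N` indexed by `B`, and its determinant is
nonnegative.
-/

open Finset Matrix

section FunMatrix

variable {V : Type*} [DecidableEq V]

/-- The matrix of the linear map `eᵥ ↦ e_{f v}`. -/
def funMatrix (R : Type*) [Zero R] [One R] (f : V → V) : Matrix V V R :=
  of fun i v => if f v = i then 1 else 0

lemma funMatrix_mul_transpose_apply {R : Type*} [Fintype V] [NonAssocSemiring R] (f : V → V)
    (i j : V) :
    (funMatrix R f * (funMatrix R f)ᵀ) i j = if i = j then (#{v | f v = i} : R) else 0 := by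
  simp only [funMatrix, mul_apply, transpose_apply, of_apply, mul_ite, mul_one, mul_zero]
  split_ifs with hij
  · subst hij
    rw [← sum_boole]
    exact sum_congr rfl fun v _ => by split_ifs <;> rfl
  · exact sum_eq_zero fun v _ => by split_ifs with h1 h2 <;> simp_all

end FunMatrix

lemma smul_sub_one_mul_transpose {V R : Type*} [Fintype V] [DecidableEq V] [CommRing R]
    (P : Matrix V V R) (q : R) :
    (q • P - 1) * (q • P - 1)ᵀ = q ^ 2 • (P * Pᵀ) - q • (P + Pᵀ) + 1 := by
  simp only [transpose_sub, transpose_smul, transpose_one, sub_mul, mul_sub, smul_mul_smul_comm,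
    mul_one, one_mul, smul_add]
  module

namespace SimpleGraph.IsTree

variable {V : Type*} {G : SimpleGraph V} (hG : G.IsTree) (r : V)

noncomputable def pathToRoot (v : V) : G.Walk v r := (hG.existsUnique_path v r).exists.choose

lemma isPath_pathToRoot (v : V) : (hG.pathToRoot r v).IsPath :=
  (hG.existsUnique_path v r).exists.choose_spec

lemma eq_pathToRoot {v : V} {p : G.Walk v r} (hp : p.IsPath) : p = hG.pathToRoot r v :=
  (hG.existsUnique_path v r).unique hp (hG.isPath_pathToRoot r v)

/-- The root `r` is its own parent. -/
noncomputable def parent (v : V) : V := (hG.pathToRoot r v).snd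

lemma parent_root : hG.parent r r = r := by
  rw [parent, ← hG.eq_pathToRoot r Walk.IsPath.nil]
  rfl

lemma adj_parent {v : V} (hv : v ≠ r) : G.Adj v (hG.parent r v) :=
  Walk.adj_snd (Walk.not_nil_of_ne hv)

lemma parent_ne {v : V} (hv : v ≠ r) : hG.parent r v ≠ v :=
  (hG.adj_parent r hv).ne'

lemma length_pathToRoot_parent {v : V} (hv : v ≠ r) :
    (hG.pathToRoot r (hG.parent r v)).length + 1 = (hG.pathToRoot r v).length := by
  rw [parent, ← hG.eq_pathToRoot r (hG.isPath_pathToRoot r v).tail]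
  exact Walk.length_tail_add_one (Walk.not_nil_of_ne hv)

lemma parent_eq_or_parent_eq_of_adj {u v : V} (h : G.Adj u v) :
    hG.parent r u = v ∨ hG.parent r v = u := by
  by_cases hu : u ∈ (hG.pathToRoot r v).support
  · exact .inr (hG.isAcyclic.eq_snd_of_adj_start (hG.isPath_pathToRoot r v) h.symm hu).symm
  · left
    rw [parent, ← hG.eq_pathToRoot r ((hG.isPath_pathToRoot r v).cons hu (h := h))]
    exact Walk.snd_cons _ h

lemma parent_ne_of_parent_eq {u v : V} (huv : u ≠ v) (h : hG.parent r u = v) :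
    hG.parent r v ≠ u := by
  intro h'
  have hu : u ≠ r := fun hu => huv (by rw [hu, parent_root] at h; rw [hu, h])
  have hv : v ≠ r := fun hv => huv (by rw [hv, parent_root] at h'; rw [hv, h'])
  have hlu := hG.length_pathToRoot_parent r hu
  have hlv := hG.length_pathToRoot_parent r hv
  rw [h] at hlu
  rw [h'] at hlv
  omega

variable [DecidableEq V]

lemma funMatrix_parent_add_transpose_apply [DecidableRel G.Adj] {R : Type*} [NonAssocSemiring R]
    {i : V} (hi : i ≠ r) (j : V) :
    (funMatrix R (hG.parent r) + (funMatrix R (hG.parent r))ᵀ) i j =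
      if G.Adj i j then 1 else 0 := by
  simp only [funMatrix, Matrix.add_apply, transpose_apply, of_apply]
  by_cases hij : i = j
  · subst hij
    simp [hG.parent_ne r hi]
  by_cases hadj : G.Adj i j
  · rcases hG.parent_eq_or_parent_eq_of_adj r hadj with h | h
    · simp [h, hG.parent_ne_of_parent_eq r hij h, hadj]
    · simp [h, hG.parent_ne_of_parent_eq r (Ne.symm hij) h, hadj]
  · have h1 : hG.parent r j ≠ i := fun h => by
      have hj : j ≠ r := fun hj => hi (by rw [← h, hj, parent_root])
      exact hadj (h ▸ hG.adj_parent r hj).symm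
    have h2 : hG.parent r i ≠ j := fun h => hadj (h ▸ hG.adj_parent r hi)
    simp [h1, h2, hadj]

lemma filter_parent_eq [Fintype V] [DecidableRel G.Adj] {i : V} (hi : i ≠ r) :
    ({v | hG.parent r v = i} : Finset V) = (G.neighborFinset i).erase (hG.parent r i) := by
  ext v
  simp only [mem_filter, mem_univ, true_and, mem_erase, mem_neighborFinset]
  constructor
  · rintro rfl
    have hv : v ≠ r := fun hv => hi (hv ▸ hG.parent_root r)
    exact ⟨fun h => hG.parent_ne_of_parent_eq r (hG.parent_ne r hv).symm rfl h.symm,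
      (hG.adj_parent r hv).symm⟩
  · rintro ⟨hne, hadj⟩
    exact (hG.parent_eq_or_parent_eq_of_adj r hadj).resolve_left hne.symm

lemma card_filter_parent_eq_add_one [Fintype V] [DecidableRel G.Adj] {i : V} (hi : i ≠ r) :
    #({v | hG.parent r v = i} : Finset V) + 1 = G.degree i := by
  rw [hG.filter_parent_eq r hi, card_erase_add_one
    ((mem_neighborFinset ..).mpr (hG.adj_parent r hi)), card_neighborFinset_eq_degree]

noncomputable def qIncidence {R : Type*} [CommRing R] (q : R) : Matrix V V R :=
  q • funMatrix R (hG.parent r) - 1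

end SimpleGraph.IsTree

open SimpleGraph

lemma qLap_apply_eq_qIncidence_mul_transpose_apply {n : ℕ} {G : SimpleGraph (Fin n)}
    [DecidableRel G.Adj] (hG : G.IsTree) {R : Type*} [CommRing R] (q : R) {r i : Fin n}
    (hi : i ≠ r) (j : Fin n) :
    qLap G q i j = (hG.qIncidence r q * (hG.qIncidence r q)ᵀ) i j := by
  rw [IsTree.qIncidence, smul_sub_one_mul_transpose]
  simp only [Matrix.add_apply, Matrix.sub_apply, Matrix.smul_apply, smul_eq_mul,
    funMatrix_mul_transpose_apply, hG.funMatrix_parent_add_transpose_apply r hi, one_apply, qLap,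
    of_apply]
  split_ifs with hij hadj hadj
  · exact (G.irrefl (hij ▸ hadj)).elim
  · subst hij
    rw [← hG.card_filter_parent_eq_add_one r hi]
    push_cast
    ring
  · ring
  · ring

/-- For a tree `T` on `[n]`, a proper subset `B ⊊ [n]` and any real `q`, the
principal minor `det(L^q_T[B|B])` is nonnegative. -/
theorem qLap_proper_principal_minor_nonneg {n : ℕ} (G : SimpleGraph (Fin n))
    [DecidableRel G.Adj] (hG : G.IsTree) (B : Finset (Fin n))
    (hB : B ≠ Finset.univ) (q : ℝ) :
    0 ≤ ((qLap G q).submatrix (fun i : B => (i : Fin n)) (fun i : B => (i : Fin n))).det := by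
  obtain ⟨r, hr⟩ : ∃ r, r ∉ B := by simpa [eq_univ_iff_forall] using hB
  set N := (hG.qIncidence r q).submatrix (fun i : B => (i : Fin n)) id
  have hGram : (qLap G q).submatrix (fun i : B => (i : Fin n)) (fun i : B => (i : Fin n)) =
      N * Nᴴ := by
    ext i j
    have hi : (i : Fin n) ≠ r := fun h => hr (h ▸ i.2)
    exact qLap_apply_eq_qIncidence_mul_transpose_apply hG q hi j
  rw [hGram]
  exact (posSemidef_self_mul_conjTranspose N).det_nonneg
end

section
/- Let T be a tree on n vertices with oriented edge weights: each edge {u,v} gets weight q on one direction and t on the other; let ED^{q,t}_T be the matrix whose (i,j) entry is the product of the directed weights along the path from i to j (diagonal entries 1). Then det(ED^{q,t}_T) = (1 - qt)^{n-1}. -/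
/-
Root the tree at `r` and let `p j` be the parent of `j ≠ r`. Subtracting `w (p j) j` times
column `p j` from column `j`, for every `j ≠ r`, is a column operation unitriangular with
respect to depth, so it preserves the determinant. Afterwards the `(i, j)` entry, `j ≠ r`,
vanishes unless `i` lies in the subtree of `j`, where it equals `(1 - qt) E i j` because the path
from `i` to `p j` runs through `j`. Hence the new matrix is triangular with respect to depth, with
diagonal `1, 1 - qt, …, 1 - qt`.
-/

open MvPolynomial

namespace SimpleGraph

variable {V : Type*} {G : SimpleGraph V} {a b u v x y : V}

lemma Walk.dist_add_dist_le_length (p : G.Walk u v) (hx : x ∈ p.support) :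
    G.dist u x + G.dist x v ≤ p.length := by
  classical
  calc G.dist u x + G.dist x v
      ≤ (p.takeUntil x hx).length + (p.dropUntil x hx).length :=
        add_le_add (dist_le _) (dist_le _)
    _ = p.length := by rw [← Walk.length_append, p.take_spec hx]

lemma Connected.exists_adj_dist_add_one (hc : G.Connected) (hab : a ≠ b) :
    ∃ m, G.Adj m b ∧ G.dist a m + 1 = G.dist a b := by
  obtain ⟨p, hp⟩ := hc.exists_walk_length_eq_dist a b
  have hnil : ¬ p.Nil := fun h => hab h.eq
  have hadj := p.adj_penultimate hnil
  refine ⟨p.penultimate, hadj, ?_⟩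
  have hle := dist_le p.dropLast
  have hlen := p.length_dropLast_add_one hnil
  have htri : G.dist a b ≤ G.dist a p.penultimate + G.dist p.penultimate b := hc.dist_triangle
  rw [dist_eq_one_iff_adj.mpr hadj] at htri
  omega

/-- The edge `ab` is a bridge, so a shortest walk from `x` (on the side of `a`) to `y`
(on the side of `b`) passes through it. -/
lemma IsTree.dist_eq_dist_add_dist_of_adj (hG : G.IsTree) (hab : G.Adj a b)
    (hx : G.dist x b = G.dist x a + 1) (hy : G.dist y a = G.dist y b + 1) :
    G.dist x y = G.dist x b + G.dist b y := by
  have hc := hG.connected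
  obtain ⟨σ, hσ⟩ := hc.exists_walk_length_eq_dist x a
  obtain ⟨τ, hτ⟩ := hc.exists_walk_length_eq_dist y b
  obtain ⟨π, hπ⟩ := hc.exists_walk_length_eq_dist x y
  have hσab : s(a, b) ∉ σ.edges := fun he => by
    have := σ.dist_add_dist_le_length (σ.snd_mem_support_of_mem_edges he)
    rw [dist_eq_one_iff_adj.mpr hab.symm] at this
    omega
  have hτab : s(a, b) ∉ τ.edges := fun he => by
    have := τ.dist_add_dist_le_length (τ.fst_mem_support_of_mem_edges he)
    rw [dist_eq_one_iff_adj.mpr hab] at this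
    omega
  have hbridge := isBridge_iff_forall_walk_mem_edges.mp
    (isAcyclic_iff_forall_adj_isBridge.mp hG.isAcyclic hab) (σ.reverse.append (π.append τ))
  have hπab : s(a, b) ∈ π.edges := by
    simp only [Walk.edges_append, Walk.edges_reverse, List.mem_append, List.mem_reverse] at hbridge
    tauto
  have := π.dist_add_dist_le_length (π.snd_mem_support_of_mem_edges hπab)
  have := hc.dist_triangle (u := x) (v := b) (w := y)
  omega

end SimpleGraph

namespace Matrix

variable {m R : Type*} [Fintype m] [DecidableEq m] [CommRing R]

lemma det_eq_prod_diag_of_rank (M : Matrix m m R) (b : m → ℕ)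
    (h : ∀ i j, i ≠ j → b j ≤ b i → M i j = 0) : M.det = ∏ i, M i i := by
  rw [det_apply, Finset.sum_eq_single 1 _ (by simp)]
  · simp
  intro σ _ hσ
  suffices ∃ i, M (σ i) i = 0 by
    obtain ⟨i, hi⟩ := this
    exact smul_eq_zero_of_right _ (Finset.prod_eq_zero (Finset.mem_univ i) hi)
  by_contra! hne
  have hlt : ∀ i, σ i ≠ i → b (σ i) < b i := fun i hi =>
    lt_of_not_ge fun hle => hne i (h _ _ hi hle)
  obtain ⟨i, hi⟩ : ∃ i, σ i ≠ i := by
    by_contra! hfix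
    exact hσ (Equiv.ext hfix)
  have hsum : ∑ j, b (σ j) < ∑ j, b j := by
    refine Finset.sum_lt_sum (fun j _ => ?_) ⟨i, Finset.mem_univ _, hlt i hi⟩
    by_cases hj : σ j = j
    · rw [hj]
    · exact (hlt j hj).le
  rw [Equiv.sum_comp σ b] at hsum
  exact lt_irrefl _ hsum

end Matrix

namespace SimpleGraph

variable {V R : Type*} [Fintype V] [DecidableEq V] [CommRing R] {G : SimpleGraph V}

def parentElimMatrix (r : V) (p : V → V) (w : V → V → R) : Matrix V V R :=
  1 - Matrix.of fun y j => if j ≠ r ∧ y = p j then w y j else 0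

section

variable {w : V → V → R} {E : Matrix V V R} {r : V} {p : V → V}

lemma mul_parentElimMatrix_apply (i j : V) :
    (E * parentElimMatrix r p w) i j = E i j - if j ≠ r then E i (p j) * w (p j) j else 0 := by
  rw [parentElimMatrix, Matrix.mul_sub, Matrix.mul_one, Matrix.sub_apply, Matrix.mul_apply]
  by_cases hj : j = r <;> simp [hj]

lemma det_parentElimMatrix (ρ : V → ℕ) (hp : ∀ j, j ≠ r → ρ (p j) < ρ j) :
    (parentElimMatrix r p w).det = 1 := by
  rw [Matrix.det_eq_prod_diag_of_rank _ ρ]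
  · refine Finset.prod_eq_one fun i _ => ?_
    have : ¬ (i ≠ r ∧ i = p i) := fun ⟨hi, h⟩ => (hp i hi).ne (congrArg ρ h.symm)
    simp [parentElimMatrix, this]
  · intro i j hij hle
    have : ¬ (j ≠ r ∧ i = p j) := by
      rintro ⟨hj, rfl⟩
      exact absurd (hp j hj) hle.not_gt
    simp [parentElimMatrix, hij, this]

lemma mul_parentElimMatrix_apply_self (c : R) (hw : ∀ u v, G.Adj u v → w u v * w v u = c)
    (hdiag : ∀ i, E i i = 1)
    (hstep : ∀ i j k, G.Adj j k → G.dist i k = G.dist i j + 1 → E i k = E i j * w j k)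
    (hpadj : ∀ j, j ≠ r → G.Adj (p j) j) (i : V) :
    (E * parentElimMatrix r p w) i i = if i = r then 1 else 1 - c := by
  by_cases hi : i = r
  · simp [mul_parentElimMatrix_apply, hi, hdiag]
  · have hdist : G.dist i (p i) = G.dist i i + 1 := by
      rw [dist_self, dist_eq_one_iff_adj.mpr (hpadj i hi).symm]
    rw [mul_parentElimMatrix_apply, if_pos hi, if_neg hi, hstep i i (p i) (hpadj i hi).symm hdist,
      mul_assoc, hw _ _ (hpadj i hi).symm, hdiag]
    ring

/-- Column `j ≠ r` is supported on the subtree of `j`, which lies strictly deeper than `j`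
apart from `j` itself. -/
lemma IsTree.mul_parentElimMatrix_apply_eq_zero (hG : G.IsTree)
    (hstep : ∀ i j k, G.Adj j k → G.dist i k = G.dist i j + 1 → E i k = E i j * w j k)
    (hpadj : ∀ j, j ≠ r → G.Adj (p j) j) (hpdist : ∀ j, j ≠ r → G.dist r (p j) + 1 = G.dist r j)
    {i j : V} (hij : i ≠ j) (hle : G.dist r i ≤ G.dist r j) :
    (E * parentElimMatrix r p w) i j = 0 := by
  have hc := hG.connected
  by_cases hj : j = r
  · rw [hj, dist_self, Nat.le_zero, hc.dist_eq_zero_iff] at hle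
    exact absurd (hle.symm.trans hj.symm) hij
  rcases hG.dist_eq_dist_add_one_of_adj i (hpadj j hj) with hbelow | habove
  · have hcut := hG.dist_eq_dist_add_dist_of_adj (hpadj j hj) (hpdist j hj).symm hbelow
    have := hc.pos_dist_of_ne hij.symm
    omega
  · rw [mul_parentElimMatrix_apply, if_pos hj, hstep i (p j) j (hpadj j hj) habove, sub_self]

end

theorem IsTree.det_eq_one_sub_pow (hG : G.IsTree) (w : V → V → R) (c : R)
    (hw : ∀ u v, G.Adj u v → w u v * w v u = c) (E : Matrix V V R)
    (hdiag : ∀ i, E i i = 1)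
    (hstep : ∀ i j k, G.Adj j k → G.dist i k = G.dist i j + 1 → E i k = E i j * w j k) :
    E.det = (1 - c) ^ (Fintype.card V - 1) := by
  obtain ⟨r⟩ := hG.connected.nonempty
  choose! p hpadj hpdist using fun j (hj : j ≠ r) => hG.connected.exists_adj_dist_add_one hj.symm
  have hdetM : (parentElimMatrix r p w).det = 1 :=
    det_parentElimMatrix (G.dist r) fun j hj => Nat.lt_of_succ_le (hpdist j hj).le
  calc E.det = (E * parentElimMatrix r p w).det := by rw [Matrix.det_mul, hdetM, mul_one]
    _ = ∏ i, (E * parentElimMatrix r p w) i i := by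
      rw [← Matrix.det_transpose]
      exact Matrix.det_eq_prod_diag_of_rank _ (G.dist r) fun i j hij hle =>
        hG.mul_parentElimMatrix_apply_eq_zero hstep hpadj hpdist hij.symm hle
    _ = ∏ i, if i = r then 1 else 1 - c :=
      Finset.prod_congr rfl fun i _ => mul_parentElimMatrix_apply_self c hw hdiag hstep hpadj i
    _ = (1 - c) ^ (Fintype.card V - 1) := by
      simp [Finset.prod_ite, Finset.filter_ne', Finset.card_erase_of_mem]

end SimpleGraph

theorem det_qt_expDist_general {n : ℕ} (G : SimpleGraph (Fin n))
    (hG : G.IsTree)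
    (w : Fin n → Fin n → MvPolynomial (Fin 2) ℤ)
    (hw : ∀ u v, G.Adj u v →
      (w u v = X 0 ∧ w v u = X 1) ∨ (w u v = X 1 ∧ w v u = X 0))
    (E : Matrix (Fin n) (Fin n) (MvPolynomial (Fin 2) ℤ))
    (hdiag : ∀ i, E i i = 1)
    (hstep : ∀ i j k, G.Adj j k → G.dist i k = G.dist i j + 1 →
      E i k = E i j * w j k) :
    E.det = (1 - X 0 * X 1) ^ (n - 1) := by
  have hqt : ∀ u v, G.Adj u v → w u v * w v u = X 0 * X 1 := fun u v huv => by
    rcases hw u v huv with ⟨h1, h2⟩ | ⟨h1, h2⟩ <;> rw [h1, h2]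
    exact mul_comm _ _
  simpa using hG.det_eq_one_sub_pow w _ hqt E hdiag hstep

/-- For a tree `T` on `n` vertices with each edge carrying weight `q = X 0` in
one direction and `t = X 1` in the other (the assignment `w`), and `E` the
`q,t`-exponential distance matrix (diagonal `1`, `(i,j)` entry the product of
directed arc weights along the path from `i` to `j`, characterized by the
recursion along paths), `det E = (1 - qt)^(n-1)`. -/
theorem det_qt_expDist {n : ℕ} (G : SimpleGraph (Fin n)) [DecidableRel G.Adj]
    (hG : G.IsTree)
    (w : Fin n → Fin n → MvPolynomial (Fin 2) ℤ)
    (hw : ∀ u v, G.Adj u v →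
      (w u v = X 0 ∧ w v u = X 1) ∨ (w u v = X 1 ∧ w v u = X 0))
    (E : Matrix (Fin n) (Fin n) (MvPolynomial (Fin 2) ℤ))
    (hdiag : ∀ i, E i i = 1)
    (hstep : ∀ i j k, G.Adj j k → G.dist i k = G.dist i j + 1 →
      E i k = E i j * w j k) :
    E.det = (1 - X 0 * X 1) ^ (n - 1) :=
  det_qt_expDist_general G hG w hw E hdiag hstep
end

section
/- Let T be a tree on n vertices with q,t-Laplacian L^{q,t}_T = D' - A', where A' is the weighted adjacency matrix (entry q in one direction of each edge, t in the other) and D' is diagonal with entries 1 + qt(deg(i) - 1). If q,t are real numbers with qt ≠ 1, then ED^{q,t}_T is invertible and (ED^{q,t}_T)^{-1} = (1/(1-qt)) L^{q,t}_T. -/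
open SimpleGraph Finset

variable {V : Type*} [DecidableEq V] {G : SimpleGraph V}

private lemma myConcatPath {u v x : V} (p : G.Walk u v) (hp : p.IsPath)
    (h : G.Adj v x) (hx : x ∉ p.support) : (p.concat h).IsPath := by
  rw [← SimpleGraph.Walk.isPath_reverse_iff, SimpleGraph.Walk.reverse_concat]
  exact hp.reverse.cons (by simp [SimpleGraph.Walk.support_reverse, hx])

/-- In a tree, distances to adjacent vertices differ by exactly one. -/
private lemma myDichotomy (hG : G.IsTree) (i j k : V) (hjk : G.Adj j k) :
    G.dist i k = G.dist i j + 1 ∨ G.dist i j = G.dist i k + 1 := by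
  have hc := hG.isConnected
  have h1 : G.dist j k = 1 := SimpleGraph.dist_eq_one_iff_adj.mpr hjk
  have h2 : G.dist k j = 1 := SimpleGraph.dist_eq_one_iff_adj.mpr hjk.symm
  have t1 : G.dist i k ≤ G.dist i j + 1 := by
    have := hc.dist_triangle (u := i) (v := j) (w := k); omega
  have t2 : G.dist i j ≤ G.dist i k + 1 := by
    have := hc.dist_triangle (u := i) (v := k) (w := j); omega
  have hne : G.dist i j ≠ G.dist i k := by
    intro heq
    obtain ⟨P, hP, hPl⟩ := hc.exists_path_of_dist i j
    have hkP : k ∉ P.support := by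
      intro hk
      have e1 : G.dist i k ≤ (P.takeUntil k hk).length := SimpleGraph.dist_le _
      have e2 : G.dist k j ≤ (P.dropUntil k hk).length := SimpleGraph.dist_le _
      have e3 : (P.takeUntil k hk).length + (P.dropUntil k hk).length = P.length := by
        rw [← SimpleGraph.Walk.length_append, SimpleGraph.Walk.take_spec]
      omega
    have hQ : (P.concat hjk).IsPath := myConcatPath P hP hjk hkP
    obtain ⟨R, hR, hRl⟩ := hc.exists_path_of_dist i k
    have hQR : P.concat hjk = R := (hG.existsUnique_path i k).unique hQ hR
    have : (P.concat hjk).length = R.length := by rw [hQR]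
    rw [SimpleGraph.Walk.length_concat] at this
    omega
  omega

private lemma myParentExists (hG : G.IsTree) {i j : V} (hij : i ≠ j) :
    ∃ p, G.Adj p j ∧ G.dist i p + 1 = G.dist i j := by
  have hc := hG.isConnected
  have hd : 0 < G.dist i j := hc.pos_dist_of_ne hij
  obtain ⟨Q, hQ, hQl⟩ := hc.exists_path_of_dist j i
  rw [SimpleGraph.dist_comm] at hQl
  cases Q with
  | nil => exact absurd rfl (Ne.symm hij)
  | cons h r =>
      rename_i x
      refine ⟨x, h.symm, ?_⟩
      have e1 : G.dist i x ≤ r.reverse.length := SimpleGraph.dist_le _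
      rw [SimpleGraph.Walk.length_reverse] at e1
      have e2 : G.dist i j ≤ G.dist i x + G.dist x j :=
        hc.dist_triangle
      have e3 : G.dist x j = 1 := SimpleGraph.dist_eq_one_iff_adj.mpr h.symm
      simp only [SimpleGraph.Walk.length_cons] at hQl
      omega

private lemma myParentUnique (hG : G.IsTree) {i j p₁ p₂ : V}
    (h₁ : G.Adj p₁ j ∧ G.dist i p₁ + 1 = G.dist i j)
    (h₂ : G.Adj p₂ j ∧ G.dist i p₂ + 1 = G.dist i j) : p₁ = p₂ := by
  have hc := hG.isConnected
  obtain ⟨ha₁, hd₁⟩ := h₁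
  obtain ⟨ha₂, hd₂⟩ := h₂
  obtain ⟨P₁, hP₁, hl₁⟩ := hc.exists_path_of_dist i p₁
  obtain ⟨P₂, hP₂, hl₂⟩ := hc.exists_path_of_dist i p₂
  have hjP : ∀ (x : V) (P : G.Walk i x), P.IsPath → P.length + 1 = G.dist i j →
      j ∉ P.support := by
    intro x P _ hPl hj
    have e1 : G.dist i j ≤ (P.takeUntil j hj).length := SimpleGraph.dist_le _
    have e2 := SimpleGraph.Walk.length_takeUntil_le P hj
    omega
  have hQ₁ : (P₁.concat ha₁).IsPath :=
    myConcatPath P₁ hP₁ ha₁ (hjP p₁ P₁ hP₁ (by omega))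
  have hQ₂ : (P₂.concat ha₂).IsPath :=
    myConcatPath P₂ hP₂ ha₂ (hjP p₂ P₂ hP₂ (by omega))
  have hQQ : P₁.concat ha₁ = P₂.concat ha₂ := (hG.existsUnique_path i j).unique hQ₁ hQ₂
  have key : ∀ (x : V) (P : G.Walk i x) (h : G.Adj x j), P.length = G.dist i p₁ →
      (P.concat h).getVert (G.dist i p₁) = x := by
    intro x P h hPl
    rw [SimpleGraph.Walk.concat_eq_append, SimpleGraph.Walk.getVert_append]
    simp [hPl]
  have e1 : (P₁.concat ha₁).getVert (G.dist i p₁) = p₁ := key p₁ P₁ ha₁ hl₁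
  have e2 : (P₂.concat ha₂).getVert (G.dist i p₁) = p₂ := key p₂ P₂ ha₂ (by omega)
  rw [← e1, ← e2, hQQ]

/-- For a tree `T` with real directed edge weights `q`,`t` (one on each
direction of every edge), `qt ≠ 1`, the `q,t`-exponential distance matrix `E`
(diagonal `1`, entries the products of directed arc weights along paths,
characterized by the recursion along paths) is invertible with
`E⁻¹ = (1/(1-qt)) L^{q,t}_T`, where `L^{q,t}_T = D' - A'` has diagonal entries
`1 + qt(deg i - 1)` and off-diagonal entries `-w i j` on edges. -/
theorem qt_expDist_inv {n : ℕ} (G : SimpleGraph (Fin n)) [DecidableRel G.Adj]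
    (hG : G.IsTree) (q t : ℝ) (hqt : q * t ≠ 1)
    (w : Fin n → Fin n → ℝ)
    (hw : ∀ u v, G.Adj u v → (w u v = q ∧ w v u = t) ∨ (w u v = t ∧ w v u = q))
    (E : Matrix (Fin n) (Fin n) ℝ)
    (hdiag : ∀ i, E i i = 1)
    (hstep : ∀ i j k, G.Adj j k → G.dist i k = G.dist i j + 1 →
      E i k = E i j * w j k) :
    IsUnit E.det ∧
      E⁻¹ = (1 / (1 - q * t)) •
        Matrix.of (fun i j =>
          if i = j then 1 + q * t * ((G.degree i : ℝ) - 1)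
          else if G.Adj i j then -(w i j) else 0) := by
  set L : Matrix (Fin n) (Fin n) ℝ := Matrix.of (fun i j =>
          if i = j then 1 + q * t * ((G.degree i : ℝ) - 1)
          else if G.Adj i j then -(w i j) else 0) with hL
  -- product of the two weights on an edge is q*t
  have hprod : ∀ u v, G.Adj u v → w u v * w v u = q * t := by
    intro u v huv
    rcases hw u v huv with ⟨h1, h2⟩ | ⟨h1, h2⟩ <;> rw [h1, h2] <;> ring
  have hEL : E * L = (1 - q * t) • (1 : Matrix (Fin n) (Fin n) ℝ) := by
    ext i j
    rw [Matrix.mul_apply]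
    have hzero : ∀ k ∈ Finset.univ, k ∉ insert j (G.neighborFinset j) →
        E i k * L k j = 0 := by
      intro k _ hk
      simp only [Finset.mem_insert, SimpleGraph.mem_neighborFinset, not_or] at hk
      have : L k j = 0 := by
        simp only [hL, Matrix.of_apply, if_neg hk.1]
        rw [if_neg (fun h => hk.2 (G.adj_symm h))]
      rw [this, mul_zero]
    rw [← Finset.sum_subset (Finset.subset_univ _) hzero,
      Finset.sum_insert (SimpleGraph.notMem_neighborFinset_self G j)]
    have hLjj : L j j = 1 + q * t * ((G.degree j : ℝ) - 1) := by
      simp [hL]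
    have hLkj : ∀ k, G.Adj j k → L k j = -(w k j) := by
      intro k hk
      simp only [hL, Matrix.of_apply, if_neg (G.ne_of_adj hk.symm)]
      rw [if_pos hk.symm]
    by_cases hij : i = j
    · subst hij
      have hterm : ∀ k ∈ G.neighborFinset i, E i k * L k i = -(q * t) := by
        intro k hk
        rw [SimpleGraph.mem_neighborFinset] at hk
        have hEik : E i k = w i k := by
          have := hstep i i k hk (by
            rw [SimpleGraph.dist_self, SimpleGraph.dist_eq_one_iff_adj]
            exact hk)
          rw [this, hdiag, one_mul]
        rw [hEik, hLkj k hk]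
        rw [mul_neg, hprod i k hk]
      rw [Finset.sum_congr rfl hterm, Finset.sum_const,
        SimpleGraph.card_neighborFinset_eq_degree, hdiag, hLjj]
      simp only [Matrix.smul_apply, Matrix.one_apply_eq, smul_eq_mul, mul_one,
        nsmul_eq_mul]
      ring
    · -- off-diagonal entry
      obtain ⟨p, hpj, hdp⟩ := myParentExists hG hij
      have hpmem : p ∈ G.neighborFinset j := by
        rw [SimpleGraph.mem_neighborFinset]; exact hpj.symm
      have hEij : E i j = E i p * w p j := hstep i p j hpj hdp.symm
      have hterm : ∀ k ∈ (G.neighborFinset j).erase p,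
          E i k * L k j = -(E i j * (q * t)) := by
        intro k hk
        obtain ⟨hkp, hkmem⟩ := Finset.mem_erase.mp hk
        rw [SimpleGraph.mem_neighborFinset] at hkmem
        rcases myDichotomy hG i j k hkmem with hfar | hnear
        · have hEik : E i k = E i j * w j k := hstep i j k hkmem hfar
          rw [hEik, hLkj k hkmem, mul_neg, mul_assoc, hprod j k hkmem]
        · exact absurd (myParentUnique hG ⟨hkmem.symm, by omega⟩ ⟨hpj, hdp⟩) hkp
      rw [← Finset.add_sum_erase _ _ hpmem, Finset.sum_congr rfl hterm,
        Finset.sum_const, hLkj p hpj.symm, hLjj]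
      have hcard : ((G.neighborFinset j).erase p).card = G.degree j - 1 := by
        rw [Finset.card_erase_of_mem hpmem, SimpleGraph.card_neighborFinset_eq_degree]
      have hdegpos : 1 ≤ G.degree j := by
        rw [← SimpleGraph.card_neighborFinset_eq_degree]
        exact Finset.card_pos.mpr ⟨p, hpmem⟩
      have hcast : (((G.degree j - 1 : ℕ)) : ℝ) = (G.degree j : ℝ) - 1 := by
        push_cast [hdegpos]; ring
      rw [hcard]
      simp only [Matrix.smul_apply, Matrix.one_apply_ne hij, smul_eq_mul, mul_zero,
        nsmul_eq_mul, hcast]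
      rw [hEij]
      ring
  have hsub : (1 : ℝ) - q * t ≠ 0 := sub_ne_zero.mpr (Ne.symm hqt)
  have hright : E * ((1 / (1 - q * t)) • L) = 1 := by
    rw [Matrix.mul_smul, hEL, smul_smul, one_div, inv_mul_cancel₀ hsub, one_smul]
  exact ⟨Matrix.isUnit_det_of_right_inverse hright, Matrix.inv_eq_right_inv hright⟩
end

section
/- Let T be a tree on n vertices, L_T its combinatorial Laplacian, and for z ∈ C, z ≠ 0, let L^{z,1/z}_T be the q,t-Laplacian with weights q = z, t = 1/z (weighted adjacency with z on one direction of each edge, 1/z on the other, diagonal entries 1 + (deg(i)-1)). Then for every partition λ ⊢ n, the immanantal polynomials coincide: d_λ(xI - L^{z,1/z}_T) = d_λ(xI - L_T) as polynomials in x. -/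
open Finset Polynomial

/-! On a tree, edge weights with `w u v * w v u = 1` form a coboundary: taking `ψ v` to be the
product of the weights along the path from a fixed root, `w u v = ψ v / ψ u` on every edge.
Hence `L^{z,1/z}_T = D⁻¹ L_T D` with `D = diag ψ`, and diagonal conjugation leaves every term
of an immanant unchanged, because `∏ i, ψ (σ i) / ψ i = 1` for each permutation `σ`. -/

namespace SimpleGraph

variable {V M : Type*} {G : SimpleGraph V} [CommMonoid M]

def Dart.unitWeight (w : V → V → M) (hw : ∀ u v, G.Adj u v → w u v * w v u = 1)
    (d : G.Dart) : Mˣ :=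
  ⟨w d.fst d.snd, w d.snd d.fst, hw _ _ d.adj, hw _ _ d.adj.symm⟩

def Walk.unitWeight (w : V → V → M) (hw : ∀ u v, G.Adj u v → w u v * w v u = 1)
    {u v : V} (p : G.Walk u v) : Mˣ :=
  (p.darts.map (Dart.unitWeight w hw)).prod

lemma Walk.unitWeight_concat (w : V → V → M) (hw : ∀ u v, G.Adj u v → w u v * w v u = 1)
    {u v x : V} (p : G.Walk u v) (h : G.Adj v x) :
    ((p.concat h).unitWeight w hw : M) = p.unitWeight w hw * w v x := by
  simp [Walk.unitWeight, Walk.darts_concat, Dart.unitWeight]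

lemma IsTree.exists_potential (hG : G.IsTree) (w : V → V → M)
    (hw : ∀ u v, G.Adj u v → w u v * w v u = 1) :
    ∃ ψ : V → Mˣ, ∀ u v, G.Adj u v → (ψ v : M) = ψ u * w u v := by
  obtain ⟨r⟩ := hG.connected.nonempty
  choose P hP _ using hG.existsUnique_path r
  refine ⟨fun v => (P v).unitWeight w hw, fun u v huv => ?_⟩
  beta_reduce
  by_cases hu : u ∈ (P v).support
  · rw [hG.isAcyclic.path_concat (hP u) (hP v) huv hu, Walk.unitWeight_concat]
  · have hv := hG.isAcyclic.mem_support_of_ne_mem_support_of_adj_of_isPath (hP u) (hP v) huv hu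
    rw [hG.isAcyclic.path_concat (hP v) (hP u) huv.symm hv, Walk.unitWeight_concat, mul_assoc,
      hw v u huv.symm, mul_one]

end SimpleGraph

namespace Matrix

variable {n R : Type*} [Fintype n] [DecidableEq n] [CommRing R]

lemma charmatrix_diagonal_units_conj (c : n → Rˣ) (M : Matrix n n R) :
    charmatrix (diagonal (fun i => (((c i)⁻¹ : Rˣ) : R)) * M *
        diagonal (fun i => ((c i : Rˣ) : R))) =
      diagonal (fun i =>
          (((Units.map (C : R →+* R[X]).toMonoidHom (c i))⁻¹ : R[X]ˣ) : R[X])) * charmatrix M *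
        diagonal (fun i => ((Units.map (C : R →+* R[X]).toMonoidHom (c i) : R[X]ˣ) : R[X])) := by
  refine Matrix.ext fun i j => ?_
  rcases eq_or_ne i j with rfl | hij
  · simp only [charmatrix_apply_eq, diagonal_mul, mul_diagonal, Units.coe_map_inv, Units.coe_map,
      map_mul]
    have hc : C (((c i)⁻¹ : Rˣ) : R) * C (c i : R) = 1 := by simp [← map_mul]
    linear_combination (-X : R[X]) * hc
  · simp [charmatrix_apply_ne _ _ _ hij]

end Matrix

lemma imman_diagonal_units_conj {n : ℕ} {R : Type*} [CommRing R] (χ : Equiv.Perm (Fin n) → R)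
    (c : Fin n → Rˣ) (A : Matrix (Fin n) (Fin n) R) :
    imman χ (Matrix.diagonal (fun i => (((c i)⁻¹ : Rˣ) : R)) * A *
        Matrix.diagonal (fun i => ((c i : Rˣ) : R))) = imman χ A := by
  refine Finset.sum_congr rfl fun σ _ => congrArg (χ σ * ·) ?_
  simp only [Matrix.diagonal_mul, Matrix.mul_diagonal, Finset.prod_mul_distrib]
  rw [Equiv.prod_comp σ (fun i => (c i : R)), mul_right_comm, ← Finset.prod_mul_distrib]
  simp

theorem immanantal_poly_z_invz_general {n : ℕ} (G : SimpleGraph (Fin n)) [DecidableRel G.Adj]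
    (hG : G.IsTree) (z : ℂ) (hz : z ≠ 0)
    (w : Fin n → Fin n → ℂ)
    (hw : ∀ u v, G.Adj u v →
      (w u v = z ∧ w v u = z⁻¹) ∨ (w u v = z⁻¹ ∧ w v u = z))
    (lam : Fin n → ℕ) :
    imman (fun σ => ((chiPart n lam σ : ℤ) : Polynomial ℂ))
        (Matrix.scalar (Fin n) (X : Polynomial ℂ)
          - (Matrix.of fun i j =>
              if i = j then 1 + z * z⁻¹ * ((G.degree i : ℂ) - 1)
              else if G.Adj i j then -(w i j) else 0).map Polynomial.C)
      = imman (fun σ => ((chiPart n lam σ : ℤ) : Polynomial ℂ))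
          (Matrix.scalar (Fin n) (X : Polynomial ℂ)
            - (Matrix.of fun i j =>
                if i = j then (G.degree i : ℂ)
                else if G.Adj i j then -1 else 0).map Polynomial.C) := by
  have hw_inv : ∀ u v, G.Adj u v → w u v * w v u = 1 := fun u v huv => by
    rcases hw u v huv with ⟨h₁, h₂⟩ | ⟨h₁, h₂⟩ <;> simp [h₁, h₂, hz]
  obtain ⟨ψ, hψ⟩ := hG.exists_potential w hw_inv
  set L : Matrix (Fin n) (Fin n) ℂ :=
    Matrix.of fun i j => if i = j then (G.degree i : ℂ) else if G.Adj i j then -1 else 0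
  have hL : (Matrix.of fun i j =>
      if i = j then 1 + z * z⁻¹ * ((G.degree i : ℂ) - 1)
      else if G.Adj i j then -(w i j) else 0) =
      Matrix.diagonal (fun i => (((ψ i)⁻¹ : ℂˣ) : ℂ)) * L *
        Matrix.diagonal (fun i => (ψ i : ℂ)) := by
    ext i j
    simp only [L, Matrix.diagonal_mul, Matrix.mul_diagonal, Matrix.of_apply]
    split_ifs with hij hadj
    · subst hij
      rw [mul_inv_cancel₀ hz, mul_right_comm _ _ (ψ i : ℂ), Units.inv_mul]
      ring
    · simp [hψ i j hadj]
    · simp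
  change imman _ (Matrix.charmatrix _) = imman _ (Matrix.charmatrix L)
  rw [hL, Matrix.charmatrix_diagonal_units_conj, imman_diagonal_units_conj]

/-- For a tree `T`, nonzero `z ∈ ℂ`, and the `q,t`-Laplacian with weights
`q = z`, `t = 1/z` (weight `z` on one direction of each edge and `z⁻¹` on the
other, diagonal entries `1 + z z⁻¹ (deg i - 1)`), the immanantal polynomial
`d_λ(xI - L^{z,1/z}_T)` coincides with `d_λ(xI - L_T)` for every partition
`λ ⊢ n`, where `L_T` is the combinatorial Laplacian. -/
theorem immanantal_poly_z_invz {n : ℕ} (G : SimpleGraph (Fin n)) [DecidableRel G.Adj]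
    (hG : G.IsTree) (z : ℂ) (hz : z ≠ 0)
    (w : Fin n → Fin n → ℂ)
    (hw : ∀ u v, G.Adj u v →
      (w u v = z ∧ w v u = z⁻¹) ∨ (w u v = z⁻¹ ∧ w v u = z))
    (lam : Fin n → ℕ) (hlam : Antitone lam) (hsum : ∑ i, lam i = n) :
    imman (fun σ => ((chiPart n lam σ : ℤ) : Polynomial ℂ))
        (Matrix.scalar (Fin n) (X : Polynomial ℂ)
          - (Matrix.of fun i j =>
              if i = j then 1 + z * z⁻¹ * ((G.degree i : ℂ) - 1)
              else if G.Adj i j then -(w i j) else 0).map Polynomial.C)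
      = imman (fun σ => ((chiPart n lam σ : ℤ) : Polynomial ℂ))
          (Matrix.scalar (Fin n) (X : Polynomial ℂ)
            - (Matrix.of fun i j =>
                if i = j then (G.degree i : ℂ)
                else if G.Adj i j then -1 else 0).map Polynomial.C) :=
  immanantal_poly_z_invz_general G hG z hz w hw lam
end
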